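/- arXiv:2212.06315 — 8 statements merged into one kernel-verified Lean document; each statement's English description precedes it below -/
import Mathlib

section
/- Let G be a directed multigraph with finite edge set E of size m, edge costs c ∈ ℤ^E with |c_e| ≤ C for all e ∈ E (C ≥ 0 real), capacities u ∈ ℝ^E with u_e ≥ 0 for all e, and let δ ≥ 0. For every circulation f ∈ ℝ^E with −δ ≤ f_e ≤ u_e for all e ∈ E, there exists a circulation f' ∈ ℝ^E with 0 ≤ f'_e ≤ u_e for all e ∈ E and cᵀf' ≤ cᵀf + m²·C·δ. Consequently, the minimum of cᵀf over circulations f with −δ ≤ f ≤ u is at least the minimum of cᵀf over circulations f with 0 ≤ f ≤ u, minus m²·C·δ. -/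
/-- A vector `f ∈ ℝ^E` is a circulation in the directed multigraph given by
`tail, head : E → V` if at every vertex the inflow equals the outflow. -/
def IsCirculation {V E : Type*} [Fintype E] [DecidableEq V]
    (tail head : E → V) (f : E → ℝ) : Prop :=
  ∀ v : V, (∑ e : E, if head e = v then f e else 0) = ∑ e : E, if tail e = v then f e else 0

private noncomputable def pv {V E : Type*} (tail head : E → V) (f : E → ℝ) (e : E) : V :=
  if 0 < f e then tail e else head e

private noncomputable def nv {V E : Type*} (tail head : E → V) (f : E → ℝ) (e : E) : V :=
  if 0 < f e then head e else tail e

private lemma step_exists {V E : Type*} [Fintype E] [DecidableEq V]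
    (tail head : E → V) (f : E → ℝ) (hf : IsCirculation tail head f)
    (e : E) (he : f e ≠ 0) :
    ∃ e', f e' ≠ 0 ∧ pv tail head f e' = nv tail head f e := by
  classical
  set v := nv tail head f e with hv
  have h2 : ∑ e' : E, ((if pv tail head f e' = v then |f e'| else 0)
        - (if nv tail head f e' = v then |f e'| else 0))
      = ∑ e' : E, ((if tail e' = v then f e' else 0) - (if head e' = v then f e' else 0)) := by
    apply Finset.sum_congr rfl
    intro e' _
    rcases lt_trichotomy (f e') 0 with h|h|h
    · have h1 : ¬ (0 < f e') := not_lt.2 h.le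
      simp only [pv, nv, if_neg h1, abs_of_neg h]
      split_ifs <;> try ring
    · simp [pv, nv, h]
    · simp only [pv, nv, if_pos h, abs_of_pos h]
  rw [Finset.sum_sub_distrib, Finset.sum_sub_distrib, hf v, sub_self] at h2
  have key : ∑ e' : E, (if pv tail head f e' = v then |f e'| else 0)
      = ∑ e' : E, (if nv tail head f e' = v then |f e'| else 0) := by linarith [sub_eq_zero.mp h2]
  have hpos : 0 < ∑ e' : E, (if nv tail head f e' = v then |f e'| else 0) := by
    have : |f e| ≤ ∑ e' : E, (if nv tail head f e' = v then |f e'| else 0) := by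
      have := Finset.single_le_sum (f := fun e' => if nv tail head f e' = v then |f e'| else 0)
        (fun i _ => by positivity) (Finset.mem_univ e)
      simpa [hv] using this
    have : 0 < |f e| := abs_pos.mpr he
    linarith [Finset.single_le_sum (f := fun e' => if nv tail head f e' = v then |f e'| else 0)
      (fun i _ => by positivity) (Finset.mem_univ e), abs_pos.mpr he,
      (by simp [hv] : (if nv tail head f e = v then |f e| else 0) = |f e|)]
  by_contra hcon
  push_neg at hcon
  have : ∑ e' : E, (if pv tail head f e' = v then |f e'| else 0) = 0 := by
    apply Finset.sum_eq_zero
    intro e' _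
    split_ifs with h
    · rcases eq_or_ne (f e') 0 with h0|h0
      · simp [h0]
      · exact absurd h (hcon e' h0)
    · rfl
  rw [key] at this
  linarith

private lemma exists_cycle {V E : Type*} [Fintype V] [Fintype E] [DecidableEq V]
    (tail head : E → V) (f : E → ℝ) (hf : IsCirculation tail head f)
    (e₀ : E) (he₀ : f e₀ ≠ 0) :
    ∃ χ : E → ℝ, IsCirculation tail head χ ∧ (∃ e, χ e ≠ 0) ∧
      ∀ e, χ e = 0 ∨ (χ e = 1 ∧ 0 < f e) ∨ (χ e = -1 ∧ f e < 0) := by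
  classical
  let next : {e : E // f e ≠ 0} → {e : E // f e ≠ 0} := fun p =>
    ⟨(step_exists tail head f hf p.1 p.2).choose,
     (step_exists tail head f hf p.1 p.2).choose_spec.1⟩
  let seq : ℕ → {e : E // f e ≠ 0} := fun n => next^[n] ⟨e₀, he₀⟩
  have hseq : ∀ n, pv tail head f (seq (n+1)).1 = nv tail head f (seq n).1 := by
    intro n
    have h1 : seq (n+1) = next (seq n) := Function.iterate_succ_apply' next n _
    rw [h1]
    exact (step_exists tail head f hf (seq n).1 (seq n).2).choose_spec.2
  let vs : ℕ → V := fun n => pv tail head f (seq n).1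
  have hvs : ∀ n, vs (n+1) = nv tail head f (seq n).1 := hseq
  obtain ⟨a, b, hab, heq⟩ := Fintype.exists_ne_map_eq_of_card_lt
    (fun i : Fin (Fintype.card V + 1) => vs i) (by simp)
  have hex : ∃ d, 0 < d ∧ ∃ i, vs i = vs (i + d) := by
    rcases lt_or_gt_of_ne (fun h => hab (Fin.ext h) : (a:ℕ) ≠ (b:ℕ)) with h|h
    · exact ⟨b - a, by omega, a, by rw [heq]; congr 1; omega⟩
    · exact ⟨a - b, by omega, b, by rw [← heq]; congr 1; omega⟩
  obtain ⟨hd₀, i₀, hi₀⟩ := Nat.find_spec hex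
  set d₀ := Nat.find hex with hd₀def
  have hdist : ∀ k l, i₀ ≤ k → k < l → l < i₀ + d₀ → vs k ≠ vs l := by
    intro k l hk hkl hl hvkl
    exact Nat.find_min hex (m := l - k) (by omega) ⟨by omega, k, by rw [hvkl]; congr 1; omega⟩
  have hinj : ∀ k ∈ Finset.Ico i₀ (i₀+d₀), ∀ l ∈ Finset.Ico i₀ (i₀+d₀),
      (seq k).1 = (seq l).1 → k = l := by
    intro k hk l hl h
    rw [Finset.mem_Ico] at hk hl
    by_contra hne
    rcases lt_or_gt_of_ne hne with h'|h'
    · exact hdist k l hk.1 h' hl.2 (by simp only [vs, h])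
    · exact hdist l k hl.1 h' hk.2 (by simp only [vs, h])
  set S : Finset E := (Finset.Ico i₀ (i₀+d₀)).image (fun k => (seq k).1) with hSdef
  set χ : E → ℝ := fun e => if e ∈ S then (if 0 < f e then 1 else -1) else 0 with hχdef
  have hSne : ∀ e ∈ S, f e ≠ 0 := by
    intro e he
    obtain ⟨k, _, hk⟩ := Finset.mem_image.mp he
    rw [← hk]; exact (seq k).2
  refine ⟨χ, ?_, ⟨(seq i₀).1, ?_⟩, ?_⟩
  · -- circulation
    intro v
    rw [← sub_eq_zero, ← Finset.sum_sub_distrib]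
    have h1 : ∑ e : E, ((if head e = v then χ e else 0) - (if tail e = v then χ e else 0))
        = ∑ e ∈ S, ((if head e = v then χ e else 0) - (if tail e = v then χ e else 0)) := by
      symm
      apply Finset.sum_subset (Finset.subset_univ S)
      intro e _ heS
      simp [χ, heS]
    rw [h1, hSdef, Finset.sum_image hinj]
    have h2 : ∀ k ∈ Finset.Ico i₀ (i₀ + d₀),
        ((if head (seq k).1 = v then χ (seq k).1 else 0)
          - (if tail (seq k).1 = v then χ (seq k).1 else 0))
        = ((if vs (k+1) = v then (1:ℝ) else 0) - (if vs k = v then 1 else 0)) := by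
      intro k hk
      have hmem : (seq k).1 ∈ S := by
        rw [hSdef]; exact Finset.mem_image_of_mem _ hk
      have hne := (seq k).2
      have hv1 : vs (k+1) = nv tail head f (seq k).1 := hvs k
      have hv0 : vs k = pv tail head f (seq k).1 := rfl
      rcases hne.lt_or_gt with h|h
      · simp only [hχdef, if_pos hmem, if_neg (not_lt.2 h.le)]
        rw [hv1, hv0]
        simp only [nv, pv, if_neg (not_lt.2 h.le)]
        split_ifs <;> ring
      · simp only [hχdef, if_pos hmem, if_pos h]
        rw [hv1, hv0]
        simp only [nv, pv, if_pos h]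
    rw [Finset.sum_congr rfl h2, Finset.sum_Ico_eq_sum_range]
    have h3 := Finset.sum_range_sub (fun r => if vs (i₀ + r) = v then (1:ℝ) else 0) d₀
    simp only [Nat.add_sub_cancel_left]
    have h4 : ∀ k ∈ Finset.range d₀,
        ((if vs (i₀ + k + 1) = v then (1:ℝ) else 0) - (if vs (i₀ + k) = v then 1 else 0))
        = ((if vs (i₀ + (k+1)) = v then (1:ℝ) else 0) - (if vs (i₀ + k) = v then 1 else 0)) :=
      fun k _ => rfl
    rw [Finset.sum_congr rfl h4, h3, ← hi₀]
    simp
  · -- nonzero at seq i₀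
    have hmem : (seq i₀).1 ∈ S := by
      rw [hSdef]
      exact Finset.mem_image_of_mem _ (Finset.mem_Ico.mpr ⟨le_refl _, by omega⟩)
    simp only [hχdef, if_pos hmem]
    split_ifs <;> norm_num
  · -- conformal
    intro e
    by_cases he : e ∈ S
    · rcases (hSne e he).lt_or_gt with h|h
      · exact Or.inr (Or.inr ⟨by simp [hχdef, he, not_lt.2 h.le], h⟩)
      · exact Or.inr (Or.inl ⟨by simp [hχdef, he, h], h⟩)
    · exact Or.inl (by simp [hχdef, he])

private lemma circ_add {V E : Type*} [Fintype E] [DecidableEq V] (tail head : E → V)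
    (f g : E → ℝ) (a : ℝ) (hf : IsCirculation tail head f) (hg : IsCirculation tail head g) :
    IsCirculation tail head (fun e => f e + a * g e) := by
  intro v
  have key : ∀ p : E → V, ∑ e : E, (if p e = v then f e + a * g e else 0)
      = (∑ e : E, if p e = v then f e else 0) + a * ∑ e : E, (if p e = v then g e else 0) := by
    intro p
    rw [Finset.mul_sum, ← Finset.sum_add_distrib]
    apply Finset.sum_congr rfl
    intro e _
    split_ifs <;> ring
  show (∑ e : E, if head e = v then f e + a * g e else 0)
      = (∑ e : E, if tail e = v then f e + a * g e else 0)
  rw [key head, key tail, hf v, hg v]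

private lemma decompose {V E : Type*} [Fintype V] [Fintype E] [DecidableEq V]
    (tail head : E → V) (c : E → ℝ) (C : ℝ) (hC : 0 ≤ C) (hc : ∀ e, |c e| ≤ C) :
    ∀ n : ℕ, ∀ f : E → ℝ,
      (Finset.univ.filter (fun e => f e ≠ 0)).card ≤ n →
      IsCirculation tail head f →
      ∃ f' : E → ℝ, IsCirculation tail head f' ∧
        (∀ e, 0 ≤ f' e ∧ f' e ≤ max (f e) 0) ∧
        |(∑ e : E, c e * f' e) - ∑ e : E, c e * f e|
          ≤ (Fintype.card E : ℝ) * C * ∑ e : E, max (-f e) 0 := by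
  classical
  have hRHS : ∀ f : E → ℝ, 0 ≤ (Fintype.card E : ℝ) * C * ∑ e : E, max (-f e) 0 :=
    fun f => mul_nonneg (mul_nonneg (by positivity) hC)
      (Finset.sum_nonneg fun e _ => le_max_right _ _)
  intro n
  induction n with
  | zero =>
    intro f hcard hf
    have hz : ∀ e, 0 ≤ f e := by
      intro e
      by_contra h
      have hmem : e ∈ Finset.univ.filter (fun e => f e ≠ 0) :=
        Finset.mem_filter.mpr ⟨Finset.mem_univ _, fun h0 => h (le_of_eq h0.symm)⟩
      have := Finset.card_pos.mpr ⟨e, hmem⟩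
      omega
    refine ⟨f, hf, fun e => ⟨hz e, le_max_left _ _⟩, ?_⟩
    simp only [sub_self, abs_zero]
    exact hRHS f
  | succ n ih =>
    intro f hcard hf
    by_cases hneg : ∀ e, 0 ≤ f e
    · refine ⟨f, hf, fun e => ⟨hneg e, le_max_left _ _⟩, ?_⟩
      simp only [sub_self, abs_zero]
      exact hRHS f
    push_neg at hneg
    obtain ⟨e₀, he₀⟩ := hneg
    obtain ⟨χ, hχcirc, hχne, hχconf⟩ := exists_cycle tail head f hf e₀ (ne_of_lt he₀)
    set T := Finset.univ.filter (fun e => χ e ≠ 0) with hT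
    have hTne : T.Nonempty := ⟨hχne.choose, by simp [hT, hχne.choose_spec]⟩
    set ε := T.inf' hTne (fun e => |f e|) with hε
    have hεpos : 0 < ε := by
      rw [hε, Finset.lt_inf'_iff]
      intro e heT
      rw [hT, Finset.mem_filter] at heT
      rcases hχconf e with h|h|h
      · exact absurd h heT.2
      · exact abs_pos.mpr (ne_of_gt h.2)
      · exact abs_pos.mpr (ne_of_lt h.2)
    have hεle : ∀ e, χ e ≠ 0 → ε ≤ |f e| := fun e h =>
      Finset.inf'_le _ (by simp [hT, h])
    obtain ⟨e₁, he₁T, he₁⟩ := Finset.exists_mem_eq_inf' hTne (fun e => |f e|)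
    set g := fun e => f e + (-ε) * χ e with hg
    have hgcirc : IsCirculation tail head g := circ_add tail head f χ (-ε) hf hχcirc
    have hgf : ∀ e, χ e = 0 → g e = f e := by
      intro e h; simp only [hg, h]; ring
    have hg1 : ∀ e, χ e = 1 → g e = f e - ε := by
      intro e h; simp only [hg, h]; ring
    have hg2 : ∀ e, χ e = -1 → g e = f e + ε := by
      intro e h; simp only [hg, h]; ring
    have hsupp : ∀ e, g e ≠ 0 → f e ≠ 0 := by
      intro e h hfe
      rcases hχconf e with h'|h'|h'
      · exact h (by rw [hgf e h', hfe])
      · exact absurd hfe (ne_of_gt h'.2)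
      · exact absurd hfe (ne_of_lt h'.2)
    have hfe₁ : f e₁ ≠ 0 := by
      rw [hT, Finset.mem_filter] at he₁T
      rcases hχconf e₁ with h|h|h
      · exact absurd h he₁T.2
      · exact ne_of_gt h.2
      · exact ne_of_lt h.2
    have hge₁ : g e₁ = 0 := by
      rw [hT, Finset.mem_filter] at he₁T
      rcases hχconf e₁ with h|h|h
      · exact absurd h he₁T.2
      · rw [hg1 e₁ h.1, hε, he₁, abs_of_pos h.2]; ring
      · rw [hg2 e₁ h.1, hε, he₁, abs_of_neg h.2]; ring
    have hcard' : (Finset.univ.filter (fun e => g e ≠ 0)).card ≤ n := by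
      have hsub : Finset.univ.filter (fun e => g e ≠ 0)
          ⊆ (Finset.univ.filter (fun e => f e ≠ 0)).erase e₁ := by
        intro e he
        rw [Finset.mem_filter] at he
        refine Finset.mem_erase.mpr ⟨?_, Finset.mem_filter.mpr ⟨Finset.mem_univ _, hsupp e he.2⟩⟩
        rintro rfl
        exact he.2 hge₁
      have h1 := Finset.card_le_card hsub
      have he₁f : e₁ ∈ Finset.univ.filter (fun e => f e ≠ 0) :=
        Finset.mem_filter.mpr ⟨Finset.mem_univ _, hfe₁⟩
      rw [Finset.card_erase_of_mem he₁f] at h1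
      omega
    obtain ⟨f'', hcirc'', hbd'', hcost''⟩ := ih g hcard' hgcirc
    have hsumg : ∑ e : E, c e * g e = (∑ e : E, c e * f e) - ε * ∑ e : E, c e * χ e := by
      rw [Finset.mul_sum, ← Finset.sum_sub_distrib]
      apply Finset.sum_congr rfl
      intro e _
      simp only [hg]
      ring
    have hχabs : ∀ e, |χ e| ≤ 1 := by
      intro e
      rcases hχconf e with h|h|h
      · rw [h]; norm_num
      · rw [h.1]; norm_num
      · rw [h.1]; norm_num
    have hχsum : |∑ e : E, c e * χ e| ≤ (Fintype.card E : ℝ) * C := by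
      calc |∑ e : E, c e * χ e| ≤ ∑ e : E, |c e * χ e| := Finset.abs_sum_le_sum_abs _ _
        _ ≤ ∑ _e : E, C := by
            apply Finset.sum_le_sum
            intro e _
            rw [abs_mul]
            calc |c e| * |χ e| ≤ C * 1 :=
              mul_le_mul (hc e) (hχabs e) (abs_nonneg _) hC
            _ = C := mul_one C
        _ = (Fintype.card E : ℝ) * C := by
            rw [Finset.sum_const, nsmul_eq_mul, Finset.card_univ]
    by_cases hcase : ∀ e, χ e ≠ -1
    · -- Case A : cycle is all nonnegative; add it back
      have hconf' : ∀ e, χ e = 0 ∨ (χ e = 1 ∧ 0 < f e) := by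
        intro e
        rcases hχconf e with h|h|h
        · exact Or.inl h
        · exact Or.inr h
        · exact absurd h.1 (hcase e)
      refine ⟨fun e => f'' e + ε * χ e, circ_add tail head f'' χ ε hcirc'' hχcirc, ?_, ?_⟩
      · intro e
        rcases hconf' e with h|⟨h1, h2⟩
        · have := hbd'' e
          rw [hgf e h] at this
          simpa [h] using this
        · have hb := hbd'' e
          rw [hg1 e h1] at hb
          have hεf : ε ≤ f e := by
            have := hεle e (by rw [h1]; norm_num)
            rwa [abs_of_pos h2] at this
          have hm1 : max (f e - ε) 0 = f e - ε := max_eq_left (by linarith)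
          have hm2 : max (f e) 0 = f e := max_eq_left h2.le
          rw [hm1] at hb
          constructor
          · show 0 ≤ f'' e + ε * χ e
            rw [h1]; linarith [hb.1]
          · show f'' e + ε * χ e ≤ max (f e) 0
            rw [h1, hm2]; linarith [hb.2]
      · have hsum' : ∑ e : E, c e * (f'' e + ε * χ e)
            = (∑ e : E, c e * f'' e) + ε * ∑ e : E, c e * χ e := by
          rw [Finset.mul_sum, ← Finset.sum_add_distrib]
          apply Finset.sum_congr rfl
          intro e _
          ring
        have hmaxeq : ∑ e : E, max (-g e) 0 = ∑ e : E, max (-f e) 0 := by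
          apply Finset.sum_congr rfl
          intro e _
          rcases hconf' e with h|⟨h1, h2⟩
          · rw [hgf e h]
          · have hεf : ε ≤ f e := by
              have := hεle e (by rw [h1]; norm_num)
              rwa [abs_of_pos h2] at this
            rw [hg1 e h1, max_eq_right (by linarith), max_eq_right (by linarith)]
        have key : (∑ e : E, c e * (f'' e + ε * χ e)) - ∑ e : E, c e * f e
            = (∑ e : E, c e * f'' e) - ∑ e : E, c e * g e := by
          rw [hsum', hsumg]; ring
        rw [key, ← hmaxeq]
        exact hcost''
    · -- Case B : cycle uses a negative edge; drop it
      push_neg at hcase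
      obtain ⟨e₂, he₂⟩ := hcase
      have hfe₂ : f e₂ < 0 := by
        rcases hχconf e₂ with h|h|h
        · rw [he₂] at h; norm_num at h
        · rw [he₂] at h; norm_num at h
        · exact h.2
      have hεe₂ : ε ≤ -f e₂ := by
        have := hεle e₂ (by rw [he₂]; norm_num)
        rwa [abs_of_neg hfe₂] at this
      refine ⟨f'', hcirc'', ?_, ?_⟩
      · intro e
        refine ⟨(hbd'' e).1, le_trans (hbd'' e).2 ?_⟩
        rcases hχconf e with h|⟨h1, h2⟩|⟨h1, h2⟩
        · rw [hgf e h]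
        · rw [hg1 e h1]
          exact max_le_max (by linarith) le_rfl
        · have hεf : ε ≤ -f e := by
            have := hεle e (by rw [h1]; norm_num)
            rwa [abs_of_neg h2] at this
          rw [hg2 e h1, max_eq_right (by linarith)]
          exact le_max_right _ _
      · have hterm : ∀ e, max (-g e) 0 ≤ max (-f e) 0 := by
          intro e
          rcases hχconf e with h|⟨h1, h2⟩|⟨h1, h2⟩
          · rw [hgf e h]
          · have hεf : ε ≤ f e := by
              have := hεle e (by rw [h1]; norm_num)
              rwa [abs_of_pos h2] at this
            rw [hg1 e h1, max_eq_right (by linarith), max_eq_right (by linarith)]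
          · have hεf : ε ≤ -f e := by
              have := hεle e (by rw [h1]; norm_num)
              rwa [abs_of_neg h2] at this
            rw [hg2 e h1, max_eq_left (by linarith), max_eq_left (by linarith)]
            linarith
        have hterm₂ : max (-g e₂) 0 ≤ max (-f e₂) 0 - ε := by
          rw [hg2 e₂ he₂, max_eq_left (by linarith), max_eq_left (by linarith)]
          linarith
        have hsumle : ∑ e : E, max (-g e) 0 ≤ (∑ e : E, max (-f e) 0) - ε := by
          have h1 : ∑ e : E, max (-g e) 0
              = max (-g e₂) 0 + ∑ e ∈ Finset.univ.erase e₂, max (-g e) 0 :=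
            (Finset.add_sum_erase _ _ (Finset.mem_univ e₂)).symm
          have h2 : ∑ e : E, max (-f e) 0
              = max (-f e₂) 0 + ∑ e ∈ Finset.univ.erase e₂, max (-f e) 0 :=
            (Finset.add_sum_erase _ _ (Finset.mem_univ e₂)).symm
          rw [h1, h2]
          have h3 : ∑ e ∈ Finset.univ.erase e₂, max (-g e) 0
              ≤ ∑ e ∈ Finset.univ.erase e₂, max (-f e) 0 :=
            Finset.sum_le_sum fun e _ => hterm e
          linarith [hterm₂]
        have key : (∑ e : E, c e * f'' e) - ∑ e : E, c e * f e
            = ((∑ e : E, c e * f'' e) - ∑ e : E, c e * g e) + (-ε) * ∑ e : E, c e * χ e := by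
          rw [hsumg]; ring
        have hmC : (0:ℝ) ≤ (Fintype.card E : ℝ) * C := mul_nonneg (by positivity) hC
        calc |(∑ e : E, c e * f'' e) - ∑ e : E, c e * f e|
            ≤ |(∑ e : E, c e * f'' e) - ∑ e : E, c e * g e| + ε * |∑ e : E, c e * χ e| := by
              rw [key]
              refine le_trans (abs_add_le _ _) ?_
              rw [abs_mul, abs_neg, abs_of_pos hεpos]
          _ ≤ (Fintype.card E : ℝ) * C * ((∑ e : E, max (-f e) 0) - ε)
              + ε * ((Fintype.card E : ℝ) * C) := by
              refine add_le_add (le_trans hcost'' ?_) ?_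
              · exact mul_le_mul_of_nonneg_left hsumle hmC
              · exact mul_le_mul_of_nonneg_left hχsum hεpos.le
          _ = (Fintype.card E : ℝ) * C * ∑ e : E, max (-f e) 0 := by ring


/-- For every circulation `f` with `−δ ≤ f ≤ u` there is a circulation `f'` with
`0 ≤ f' ≤ u` and `cᵀf' ≤ cᵀf + m²·C·δ`; consequently the minimum cost over
circulations with `−δ ≤ f ≤ u` is at least the minimum cost over circulations with
`0 ≤ f ≤ u`, minus `m²·C·δ`. -/
theorem stmt0 {V E : Type*} [Fintype V] [Fintype E] [DecidableEq V]
    (tail head : E → V) (m : ℕ) (hm : Fintype.card E = m)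
    (c : E → ℤ) (C : ℝ) (hC : 0 ≤ C) (hc : ∀ e, |(c e : ℝ)| ≤ C)
    (u : E → ℝ) (hu : ∀ e, 0 ≤ u e) (δ : ℝ) (hδ : 0 ≤ δ) :
    (∀ f : E → ℝ, IsCirculation tail head f → (∀ e, -δ ≤ f e ∧ f e ≤ u e) →
      ∃ f' : E → ℝ, IsCirculation tail head f' ∧ (∀ e, 0 ≤ f' e ∧ f' e ≤ u e) ∧
        ∑ e : E, (c e : ℝ) * f' e ≤ (∑ e : E, (c e : ℝ) * f e) + (m : ℝ) ^ 2 * C * δ) ∧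
    sInf {x : ℝ | ∃ f : E → ℝ, IsCirculation tail head f ∧
        (∀ e, 0 ≤ f e ∧ f e ≤ u e) ∧ x = ∑ e : E, (c e : ℝ) * f e}
      - (m : ℝ) ^ 2 * C * δ ≤
    sInf {x : ℝ | ∃ f : E → ℝ, IsCirculation tail head f ∧
        (∀ e, -δ ≤ f e ∧ f e ≤ u e) ∧ x = ∑ e : E, (c e : ℝ) * f e} := by
  classical
  have main : ∀ f : E → ℝ, IsCirculation tail head f → (∀ e, -δ ≤ f e ∧ f e ≤ u e) →
      ∃ f' : E → ℝ, IsCirculation tail head f' ∧ (∀ e, 0 ≤ f' e ∧ f' e ≤ u e) ∧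
        ∑ e : E, (c e : ℝ) * f' e ≤ (∑ e : E, (c e : ℝ) * f e) + (m : ℝ) ^ 2 * C * δ := by
    intro f hf hbd
    obtain ⟨f', hcirc', hb', hcost'⟩ := decompose tail head (fun e => (c e : ℝ)) C hC hc
      (Finset.univ.filter (fun e => f e ≠ 0)).card f le_rfl hf
    refine ⟨f', hcirc', fun e => ⟨(hb' e).1, le_trans (hb' e).2 (max_le (hbd e).2 (hu e))⟩, ?_⟩
    have h1 : ∑ e : E, max (-f e) 0 ≤ (m : ℝ) * δ := by
      calc ∑ e : E, max (-f e) 0 ≤ ∑ _e : E, δ :=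
            Finset.sum_le_sum fun e _ => max_le (by linarith [(hbd e).1]) hδ
        _ = (m : ℝ) * δ := by rw [Finset.sum_const, nsmul_eq_mul, Finset.card_univ, hm]
    have h3 : ((Fintype.card E : ℕ) : ℝ) = (m : ℝ) := by rw [hm]
    rw [h3] at hcost'
    have h4 : |(∑ e : E, (c e : ℝ) * f' e) - ∑ e : E, (c e : ℝ) * f e|
        ≤ (m : ℝ) * C * ((m : ℝ) * δ) :=
      le_trans hcost' (mul_le_mul_of_nonneg_left h1 (mul_nonneg (by positivity) hC))
    have h5 := (abs_le.mp h4).2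
    have h6 : (m : ℝ) * C * ((m : ℝ) * δ) = (m : ℝ) ^ 2 * C * δ := by ring
    linarith
  refine ⟨main, ?_⟩
  have hzero : IsCirculation tail head (fun _ : E => (0:ℝ)) := by
    intro v; simp
  have h0mem : (0:ℝ) ∈ {x : ℝ | ∃ f : E → ℝ, IsCirculation tail head f ∧
      (∀ e, 0 ≤ f e ∧ f e ≤ u e) ∧ x = ∑ e : E, (c e : ℝ) * f e} :=
    ⟨fun _ => 0, hzero, fun e => ⟨le_refl 0, hu e⟩, by simp⟩
  have hbdd : BddBelow {x : ℝ | ∃ f : E → ℝ, IsCirculation tail head f ∧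
      (∀ e, 0 ≤ f e ∧ f e ≤ u e) ∧ x = ∑ e : E, (c e : ℝ) * f e} := by
    refine ⟨-∑ e : E, C * u e, ?_⟩
    rintro x ⟨f, hf, hb, rfl⟩
    rw [← Finset.sum_neg_distrib]
    apply Finset.sum_le_sum
    intro e _
    have hle := abs_le.mp (hc e)
    have p1 : 0 ≤ ((c e : ℝ) + C) * f e := mul_nonneg (by linarith [hle.1]) (hb e).1
    have p2 : 0 ≤ C * (u e - f e) := mul_nonneg hC (by linarith [(hb e).2])
    nlinarith
  apply le_csInf
  · exact ⟨0, fun _ => 0, hzero, fun e => ⟨show -δ ≤ (0:ℝ) by linarith, hu e⟩, by simp⟩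
  · rintro x ⟨f, hf, hb, rfl⟩
    obtain ⟨f', h1, h2, h3⟩ := main f hf hb
    have h4 : sInf {x : ℝ | ∃ f : E → ℝ, IsCirculation tail head f ∧
        (∀ e, 0 ≤ f e ∧ f e ≤ u e) ∧ x = ∑ e : E, (c e : ℝ) * f e}
        ≤ ∑ e : E, (c e : ℝ) * f' e := csInf_le hbdd ⟨f', h1, h2, rfl⟩
    linarith
end

section
/- If f ∈ ℝ^E is strictly feasible with cᵀf > F and Φ(f) ≤ −200·m·log(mCU), then cᵀf ≤ F + (mCU)^{−10}. -/
/-- If `f` is strictly feasible with `cᵀf > F` and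
`Φ(f) ≤ −200·m·log(mCU)`, then `cᵀf ≤ F + (mCU)^{−10}`. -/
theorem stmt1 {E : Type*} [Fintype E]
    (m C U : ℤ) (hm1 : 1 ≤ m) (hC1 : 1 ≤ C) (hU1 : 1 ≤ U)
    (hmE : (Fintype.card E : ℤ) ≤ m) (hmCU : 2 ≤ m * C * U)
    (c : E → ℤ) (hc : ∀ e, |c e| ≤ C)
    (u : E → ℤ) (hu : ∀ e, 1 ≤ u e ∧ u e ≤ U)
    (F : ℤ) (α δ : ℝ)
    (hα : α = 1 / (5000 * Real.log ((m * C * U : ℤ) : ℝ)))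
    (hδ : δ = 1 / (20 * (m : ℝ) ^ 2 * (C : ℝ)))
    (f : E → ℝ)
    (hfeas : ∀ e, -δ < f e ∧ f e < (u e : ℝ))
    (hcost : (F : ℝ) < ∑ e : E, (c e : ℝ) * f e)
    (hΦ : 20 * (m : ℝ) * Real.log ((∑ e : E, (c e : ℝ) * f e) - (F : ℝ))
        + ∑ e : E, (((u e : ℝ) - f e) ^ (-α) + (f e + δ) ^ (-α))
        ≤ -200 * (m : ℝ) * Real.log ((m * C * U : ℤ) : ℝ)) :
    ∑ e : E, (c e : ℝ) * f e ≤ (F : ℝ) + ((m * C * U : ℤ) : ℝ) ^ (-10 : ℝ) := by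
  set M : ℝ := ((m * C * U : ℤ) : ℝ) with hM
  have hM2 : (2 : ℝ) ≤ M := by rw [hM]; exact_mod_cast hmCU
  have hMpos : (0 : ℝ) < M := by linarith
  set x : ℝ := (∑ e : E, (c e : ℝ) * f e) - (F : ℝ) with hx
  have hxpos : 0 < x := by simp only [hx]; linarith
  have hsum : 0 ≤ ∑ e : E, (((u e : ℝ) - f e) ^ (-α) + (f e + δ) ^ (-α)) := by
    apply Finset.sum_nonneg
    intro e _
    have h1 : 0 < (u e : ℝ) - f e := by linarith [(hfeas e).2]
    have h2 : 0 < f e + δ := by linarith [(hfeas e).1]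
    have := Real.rpow_pos_of_pos h1 (-α)
    have := Real.rpow_pos_of_pos h2 (-α)
    linarith
  have hmpos : (0 : ℝ) < (m : ℝ) := by exact_mod_cast hm1.trans_lt' (by norm_num)
  have hlog : Real.log x ≤ -10 * Real.log M := by
    nlinarith [hΦ, hsum, hmpos]
  have hxle : x ≤ M ^ (-10 : ℝ) := by
    rw [Real.rpow_def_of_pos hMpos]
    calc x = Real.exp (Real.log x) := (Real.exp_log hxpos).symm
    _ ≤ Real.exp (Real.log M * (-10 : ℝ)) := Real.exp_le_exp.mpr (by linarith)
  simp only [hx] at hxle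
  linarith
end

section
/- Let f ∈ ℝ^E be a strictly feasible circulation with log(cᵀf − F) ≥ −10·log(mCU) and Φ(f) ≤ 200·m·log(mCU). Suppose there exists a circulation f* ∈ ℝ^E with 0 ≤ f*_e ≤ u_e for all e ∈ E and cᵀf* ≤ F. Let 0 ≤ ε < α/2, let g̃ ∈ ℝ^E satisfy ‖L(f)^{−1}(g̃ − g(f))‖_∞ ≤ ε, and let ℓ̃ ∈ ℝ^E with ℓ̃ > 0 satisfy ℓ̃ ≈₂ ℓ(f), with L̃ = diag(ℓ̃). Then g̃ᵀ(f* − f) / ‖L̃(f* − f)‖₁ ≤ −α/4. -/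
lemma stmt3_aux1 (α a b d : ℝ) (hα : 0 < α) (ha : 0 < a) (hb : 0 < b)
    (h1 : d ≤ a) (h2 : -b ≤ d) :
    (α * a ^ (-1 - α) - α * b ^ (-1 - α)) * d
      ≤ -(α * ((a ^ (-1 - α) + b ^ (-1 - α)) * |d|)) + 2 * α * (a ^ (-α) + b ^ (-α)) := by
  have ea : a ^ (-α) = a ^ (-1 - α) * a := by
    rw [show -α = (-1 - α) + 1 by ring, Real.rpow_add_one ha.ne']
  have eb : b ^ (-α) = b ^ (-1 - α) * b := by
    rw [show -α = (-1 - α) + 1 by ring, Real.rpow_add_one hb.ne']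
  have pa : 0 < a ^ (-1 - α) := Real.rpow_pos_of_pos ha _
  have pb : 0 < b ^ (-1 - α) := Real.rpow_pos_of_pos hb _
  rcases le_or_gt 0 d with hd | hd
  · rw [abs_of_nonneg hd, ea, eb]
    have h3 : a ^ (-1 - α) * d ≤ a ^ (-1 - α) * a := mul_le_mul_of_nonneg_left h1 pa.le
    nlinarith [mul_le_mul_of_nonneg_left h3 hα.le, mul_pos (mul_pos hα pb) hb]
  · rw [abs_of_neg hd, ea, eb]
    have h3 : b ^ (-1 - α) * (-d) ≤ b ^ (-1 - α) * b :=
      mul_le_mul_of_nonneg_left (by linarith) pb.le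
    nlinarith [mul_le_mul_of_nonneg_left h3 hα.le, mul_pos (mul_pos hα pa) ha]

/-- If a feasible circulation `f*` of cost at most `F` exists, then for approximate
gradients `g̃` and lengths `ℓ̃`, the ratio `g̃ᵀ(f* − f)/‖L̃(f* − f)‖₁` is at most `−α/4`. -/
theorem stmt3 {V E : Type*} [Fintype V] [Fintype E] [DecidableEq V]
    (tail head : E → V)
    (m C U : ℤ) (hm1 : 1 ≤ m) (hC1 : 1 ≤ C) (hU1 : 1 ≤ U)
    (hmE : (Fintype.card E : ℤ) ≤ m) (hmCU : 2 ≤ m * C * U)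
    (c : E → ℤ) (hc : ∀ e, |c e| ≤ C)
    (u : E → ℤ) (hu : ∀ e, 1 ≤ u e ∧ u e ≤ U)
    (F : ℤ) (α δ : ℝ)
    (hα : α = 1 / (5000 * Real.log ((m * C * U : ℤ) : ℝ)))
    (hδ : δ = 1 / (20 * (m : ℝ) ^ 2 * (C : ℝ)))
    -- `f` is a strictly feasible circulation with `cᵀf > F`
    (f : E → ℝ) (hcirc : IsCirculation tail head f)
    (hfeas : ∀ e, -δ < f e ∧ f e < (u e : ℝ))
    (hcost : (F : ℝ) < ∑ e : E, (c e : ℝ) * f e)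
    -- lengths `ℓ(f)` and gradient `g(f)`
    (ℓf gf : E → ℝ)
    (hℓf : ∀ e, ℓf e = ((u e : ℝ) - f e) ^ (-1 - α) + (f e + δ) ^ (-1 - α))
    (hgf : ∀ e, gf e = 20 * (m : ℝ) * ((∑ e' : E, (c e' : ℝ) * f e') - (F : ℝ))⁻¹ * (c e : ℝ)
        + α * ((u e : ℝ) - f e) ^ (-1 - α) - α * (f e + δ) ^ (-1 - α))
    -- `log(cᵀf − F) ≥ −10·log(mCU)` and `Φ(f) ≤ 200·m·log(mCU)`
    (hlog : -10 * Real.log ((m * C * U : ℤ) : ℝ)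
        ≤ Real.log ((∑ e : E, (c e : ℝ) * f e) - (F : ℝ)))
    (hΦ : 20 * (m : ℝ) * Real.log ((∑ e : E, (c e : ℝ) * f e) - (F : ℝ))
        + ∑ e : E, (((u e : ℝ) - f e) ^ (-α) + (f e + δ) ^ (-α))
        ≤ 200 * (m : ℝ) * Real.log ((m * C * U : ℤ) : ℝ))
    -- the feasible circulation `f*` of cost at most `F`
    (fstar : E → ℝ) (hstarcirc : IsCirculation tail head fstar)
    (hstarfeas : ∀ e, 0 ≤ fstar e ∧ fstar e ≤ (u e : ℝ))
    (hstarcost : ∑ e : E, (c e : ℝ) * fstar e ≤ (F : ℝ))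
    -- approximate gradient `g̃` and lengths `ℓ̃`
    (ε : ℝ) (hε0 : 0 ≤ ε) (hεα : ε < α / 2)
    (gt : E → ℝ) (hgt : ∀ e, |(ℓf e)⁻¹ * (gt e - gf e)| ≤ ε)
    (lt : E → ℝ) (hltpos : ∀ e, 0 < lt e)
    (hlt : ∀ e, lt e / 2 ≤ ℓf e ∧ ℓf e ≤ 2 * lt e) :
    (∑ e : E, gt e * (fstar e - f e)) / (∑ e : E, lt e * |fstar e - f e|) ≤ -α / 4 := by
  set s : ℝ := ∑ e : E, (c e : ℝ) * f e with hs
  clear_value s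
  -- basic positivity facts
  have hmR : (1 : ℝ) ≤ (m : ℝ) := by exact_mod_cast hm1
  have hMR : (2 : ℝ) ≤ ((m * C * U : ℤ) : ℝ) := by exact_mod_cast hmCU
  have hlogM : 0 < Real.log ((m * C * U : ℤ) : ℝ) := Real.log_pos (by linarith)
  have hα0 : 0 < α := by rw [hα]; positivity
  have hδ0 : 0 < δ := by
    rw [hδ]
    have hCR : (1 : ℝ) ≤ (C : ℝ) := by exact_mod_cast hC1
    positivity
  have hK : 0 < s - (F : ℝ) := by linarith
  have ha : ∀ e, 0 < (u e : ℝ) - f e := fun e => by linarith [(hfeas e).2]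
  have hb : ∀ e, 0 < f e + δ := fun e => by linarith [(hfeas e).1]
  have hℓpos : ∀ e, 0 < ℓf e := fun e => by
    rw [hℓf e]
    have h1 := Real.rpow_pos_of_pos (ha e) (-1 - α)
    have h2 := Real.rpow_pos_of_pos (hb e) (-1 - α)
    linarith
  -- bound on the barrier sum P
  have hαlog : α * Real.log ((m * C * U : ℤ) : ℝ) = 1 / 5000 := by
    rw [hα, div_mul_eq_mul_div, one_mul, mul_comm (5000 : ℝ),
      div_mul_cancel_left₀ hlogM.ne']
    norm_num
  have hP400 : ∑ e : E, (((u e : ℝ) - f e) ^ (-α) + (f e + δ) ^ (-α))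
      ≤ 400 * (m : ℝ) * Real.log ((m * C * U : ℤ) : ℝ) := by
    nlinarith [mul_nonneg (by linarith : (0:ℝ) ≤ 20 * (m:ℝ))
      (by linarith : (0:ℝ) ≤ Real.log (s - (F:ℝ)) + 10 * Real.log ((m * C * U : ℤ) : ℝ))]
  have h2αP : 2 * α * (∑ e : E, (((u e : ℝ) - f e) ^ (-α) + (f e + δ) ^ (-α))) ≤ 20 * (m : ℝ) := by
    have h1 := mul_le_mul_of_nonneg_left hP400 hα0.le
    have h2 : α * (400 * (m : ℝ) * Real.log ((m * C * U : ℤ) : ℝ))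
        = 400 * (m : ℝ) * (α * Real.log ((m * C * U : ℤ) : ℝ)) := by ring
    rw [h2, hαlog] at h1
    nlinarith
  -- per-edge gradient bound
  have key : ∀ e : E, gf e * (fstar e - f e)
      ≤ 20 * (m : ℝ) * (s - (F : ℝ))⁻¹ * ((c e : ℝ) * (fstar e - f e))
        - α * (ℓf e * |fstar e - f e|)
        + 2 * α * (((u e : ℝ) - f e) ^ (-α) + (f e + δ) ^ (-α)) := by
    intro e
    have h := stmt3_aux1 α ((u e : ℝ) - f e) (f e + δ) (fstar e - f e) hα0 (ha e) (hb e)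
      (by linarith [(hstarfeas e).2]) (by linarith [(hstarfeas e).1])
    rw [hgf e, hℓf e]
    linarith [h]
  -- sum the per-edge bound
  have hsplit : ∑ e : E, (20 * (m : ℝ) * (s - (F : ℝ))⁻¹ * ((c e : ℝ) * (fstar e - f e))
        - α * (ℓf e * |fstar e - f e|)
        + 2 * α * (((u e : ℝ) - f e) ^ (-α) + (f e + δ) ^ (-α)))
      = 20 * (m : ℝ) * (s - (F : ℝ))⁻¹ * (∑ e : E, (c e : ℝ) * (fstar e - f e))
        - α * (∑ e : E, ℓf e * |fstar e - f e|)
        + 2 * α * (∑ e : E, (((u e : ℝ) - f e) ^ (-α) + (f e + δ) ^ (-α))) := by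
    rw [Finset.mul_sum, Finset.mul_sum, Finset.mul_sum, ← Finset.sum_sub_distrib,
      ← Finset.sum_add_distrib]
  have hgfsum : ∑ e : E, gf e * (fstar e - f e)
      ≤ 20 * (m : ℝ) * (s - (F : ℝ))⁻¹ * (∑ e : E, (c e : ℝ) * (fstar e - f e))
        - α * (∑ e : E, ℓf e * |fstar e - f e|)
        + 2 * α * (∑ e : E, (((u e : ℝ) - f e) ^ (-α) + (f e + δ) ^ (-α))) := by
    rw [← hsplit]
    exact Finset.sum_le_sum fun e _ => key e
  -- the cost term
  have hcd : ∑ e : E, (c e : ℝ) * (fstar e - f e) ≤ -(s - (F : ℝ)) := by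
    have heq : ∑ e : E, (c e : ℝ) * (fstar e - f e)
        = (∑ e : E, (c e : ℝ) * fstar e) - ∑ e : E, (c e : ℝ) * f e := by
      rw [← Finset.sum_sub_distrib]
      exact Finset.sum_congr rfl fun e _ => by ring
    rw [heq, ← hs]
    linarith
  have hterm1 : 20 * (m : ℝ) * (s - (F : ℝ))⁻¹ * (∑ e : E, (c e : ℝ) * (fstar e - f e))
      ≤ -(20 * (m : ℝ)) := by
    have hpos : (0 : ℝ) ≤ 20 * (m : ℝ) * (s - (F : ℝ))⁻¹ :=
      mul_nonneg (by linarith) (inv_pos.mpr hK).le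
    have h1 := mul_le_mul_of_nonneg_left hcd hpos
    have h2 : 20 * (m : ℝ) * (s - (F : ℝ))⁻¹ * (-(s - (F : ℝ))) = -(20 * (m : ℝ)) := by
      field_simp
    linarith
  -- exact gradient bound
  have hgfL : ∑ e : E, gf e * (fstar e - f e)
      ≤ -α * (∑ e : E, ℓf e * |fstar e - f e|) := by
    linarith
  -- move to approximate gradient
  have key2 : ∀ e : E, gt e * (fstar e - f e)
      ≤ gf e * (fstar e - f e) + ε * (ℓf e * |fstar e - f e|) := by
    intro e
    have hlp := hℓpos e
    have h := hgt e
    rw [abs_mul, abs_of_pos (inv_pos.mpr hlp)] at h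
    have h2 : |gt e - gf e| ≤ ε * ℓf e := by
      rw [inv_mul_le_iff₀ hlp] at h
      linarith [h]
    have h3 : (gt e - gf e) * (fstar e - f e) ≤ |gt e - gf e| * |fstar e - f e| := by
      rw [← abs_mul]; exact le_abs_self _
    linarith [h3, mul_le_mul_of_nonneg_right h2 (abs_nonneg (fstar e - f e))]
  have hgtsum : ∑ e : E, gt e * (fstar e - f e)
      ≤ (∑ e : E, gf e * (fstar e - f e)) + ε * (∑ e : E, ℓf e * |fstar e - f e|) := by
    rw [Finset.mul_sum, ← Finset.sum_add_distrib]
    exact Finset.sum_le_sum fun e _ => key2 e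
  have hL1 : 0 ≤ ∑ e : E, ℓf e * |fstar e - f e| :=
    Finset.sum_nonneg fun e _ => mul_nonneg (hℓpos e).le (abs_nonneg _)
  -- denominator bounds
  have hDL : ∑ e : E, lt e * |fstar e - f e| ≤ 2 * (∑ e : E, ℓf e * |fstar e - f e|) := by
    rw [Finset.mul_sum]
    refine Finset.sum_le_sum fun e _ => ?_
    have := (hlt e).1
    nlinarith [abs_nonneg (fstar e - f e)]
  have hne : ∃ e : E, fstar e ≠ f e := by
    by_contra h
    push_neg at h
    have : s = ∑ e : E, (c e : ℝ) * fstar e := by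
      rw [hs]
      exact Finset.sum_congr rfl fun e _ => by rw [h e]
    linarith
  obtain ⟨e0, he0⟩ := hne
  have hD : 0 < ∑ e : E, lt e * |fstar e - f e| := by
    refine Finset.sum_pos' (fun e _ => mul_nonneg (hltpos e).le (abs_nonneg _))
      ⟨e0, Finset.mem_univ e0, ?_⟩
    have h1 := hltpos e0
    have h2 : 0 < |fstar e0 - f e0| := abs_pos.mpr (sub_ne_zero.mpr he0)
    positivity
  -- conclude
  rw [div_le_iff₀ hD]
  have hfinal : ∑ e : E, gt e * (fstar e - f e)
      ≤ (-α + ε) * (∑ e : E, ℓf e * |fstar e - f e|) := by linarith [hgtsum, hgfL]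
  have hA := mul_le_mul_of_nonneg_left hDL (by linarith : (0:ℝ) ≤ α / 4)
  have hB := mul_le_mul_of_nonneg_right (by linarith : -α + ε ≤ -(α / 2)) hL1
  linarith [hfinal, hA, hB]
end

section
/- Let κ' ∈ (0,1), let f ∈ ℝ^E be a strictly feasible circulation with cᵀf > F, let g̃ ∈ ℝ^E satisfy ‖L(f)^{−1}(g̃ − g(f))‖_∞ ≤ κ'/8, and let ℓ̃ ∈ ℝ^E with ℓ̃ > 0 satisfy ℓ̃ ≈₂ ℓ(f), with L̃ = diag(ℓ̃). Let Δ ∈ ℝ^E be a nonzero circulation with g̃ᵀΔ / ‖L̃Δ‖₁ ≤ −κ', and let η ∈ ℝ satisfy η·g̃ᵀΔ = −κ'²/50. Then f + ηΔ is strictly feasible, cᵀ(f + ηΔ) > F, and Φ(f + ηΔ) ≤ Φ(f) − κ'²/500. -/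
open Real Finset

lemma one_sub_rpow_neg_le {α s : ℝ} (hα0 : 0 ≤ α) (hα1 : α ≤ 1) (hs : |s| ≤ 1 / 2) :
    (1 - s) ^ (-α) ≤ 1 + α * s + 2 * α * s ^ 2 := by
  obtain ⟨hs₁, hs₂⟩ := abs_le.1 hs
  have hpos : 0 < 1 - s := by linarith
  have hinv : (1 - s)⁻¹ - 1 ≤ s + 2 * s ^ 2 := by
    rw [sub_le_iff_le_add, inv_le_iff_one_le_mul₀ hpos]
    nlinarith
  calc (1 - s) ^ (-α) = (1 + ((1 - s)⁻¹ - 1)) ^ α := by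
        rw [rpow_neg hpos.le, ← inv_rpow hpos.le, add_sub_cancel]
    _ ≤ 1 + α * ((1 - s)⁻¹ - 1) :=
        rpow_one_add_le_one_add_mul_self (by linarith [inv_pos.2 hpos]) hα0 hα1
    _ ≤ 1 + α * (s + 2 * s ^ 2) := by gcongr
    _ = 1 + α * s + 2 * α * s ^ 2 := by ring

lemma sub_rpow_neg_le {a h α : ℝ} (ha : 0 < a) (hh : |h| ≤ a / 2) (hα0 : 0 ≤ α) (hα1 : α ≤ 1) :
    (a - h) ^ (-α) ≤ a ^ (-α) + α * a ^ (-1 - α) * h + 2 * α * a ^ (-1 - α) * h ^ 2 / a := by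
  have hs : |h / a| ≤ 1 / 2 := by
    rw [abs_div, abs_of_pos ha, div_le_iff₀ ha]
    linarith
  have hs₁ : 0 ≤ 1 - h / a := by linarith [(abs_le.1 hs).2]
  have hpow : a ^ (-1 - α) = a ^ (-α) / a := by
    rw [sub_eq_neg_add, rpow_add ha, rpow_neg_one, ← div_eq_mul_inv]
  calc (a - h) ^ (-α) = a ^ (-α) * (1 - h / a) ^ (-α) := by
        rw [← mul_rpow ha.le hs₁, mul_sub, mul_one, mul_div_cancel₀ _ ha.ne']
    _ ≤ a ^ (-α) * (1 + α * (h / a) + 2 * α * (h / a) ^ 2) := by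
        gcongr
        exact one_sub_rpow_neg_le hα0 hα1 hs
    _ = a ^ (-α) + α * a ^ (-1 - α) * h + 2 * α * a ^ (-1 - α) * h ^ 2 / a := by
        rw [hpow]
        field_simp

lemma abs_le_two_mul_mul_of_rpow_le_two {a h α ε : ℝ} (ha : 0 < a) (haα : a ^ α ≤ 2)
    (hh : a ^ (-1 - α) * |h| ≤ ε) : |h| ≤ 2 * ε * a := by
  have hinv : a ^ α * a ^ (-1 - α) = a⁻¹ := by
    rw [← rpow_add ha, add_sub_cancel, rpow_neg_one]
  calc |h| = a * (a ^ α * (a ^ (-1 - α) * |h|)) := by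
        rw [← mul_assoc (a ^ α), hinv, ← mul_assoc, mul_inv_cancel₀ ha.ne', one_mul]
    _ ≤ a * (2 * ε) := by gcongr
    _ = 2 * ε * a := by ring

lemma rpow_neg_step_le {a h α ε : ℝ} (ha : 0 < a) (haα : a ^ α ≤ 2) (hα0 : 0 ≤ α) (hα1 : α ≤ 1)
    (hε : ε ≤ 1 / 4) (hh : a ^ (-1 - α) * |h| ≤ ε) :
    |h| ≤ a / 2 ∧
      (a - h) ^ (-α) ≤ a ^ (-α) + α * a ^ (-1 - α) * h + 4 * α * ε * (a ^ (-1 - α) * |h|) := by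
  have hha := abs_le_two_mul_mul_of_rpow_le_two ha haα hh
  have hhalf : |h| ≤ a / 2 := by nlinarith
  have hrel : |h| / a ≤ 2 * ε := (div_le_iff₀ ha).2 hha
  have hrem : 2 * α * a ^ (-1 - α) * h ^ 2 / a
      = 2 * α * (a ^ (-1 - α) * |h|) * (|h| / a) := by
    rw [← sq_abs h]
    ring
  have hrem_le : 2 * α * (a ^ (-1 - α) * |h|) * (|h| / a)
      ≤ 2 * α * (a ^ (-1 - α) * |h|) * (2 * ε) := by
    gcongr
  refine ⟨hhalf, (sub_rpow_neg_le ha hhalf hα0 hα1).trans ?_⟩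
  linarith

lemma log_add_le_log_add_div {S T : ℝ} (hS : 0 < S) (hST : 0 < S + T) :
    log (S + T) ≤ log S + T / S := by
  have h := log_le_sub_one_of_pos (div_pos hST hS)
  rw [log_div hST.ne' hS.ne', add_div, div_self hS.ne'] at h
  linarith

noncomputable def barrierExponent (P : ℝ) : ℝ := 1 / (5000 * log P)

lemma barrierExponent_mem_Icc {P : ℝ} (hP : 2 ≤ P) : barrierExponent P ∈ Set.Icc 0 1 := by
  have hlog : 1 / 2 < log P :=
    (by linarith [log_two_gt_d9] : (1 / 2 : ℝ) < log 2).trans_le (log_le_log two_pos hP)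
  refine ⟨by unfold barrierExponent; positivity, ?_⟩
  rw [barrierExponent, div_le_one (by positivity)]
  linarith

lemma rpow_barrierExponent_le_two {P x : ℝ} (hP : 2 ≤ P) (hx0 : 0 < x) (hx : x ≤ P ^ 2) :
    x ^ barrierExponent P ≤ 2 := by
  have hlog : 0 < log P := log_pos (by linarith)
  calc x ^ barrierExponent P = exp (log x * barrierExponent P) := rpow_def_of_pos hx0 _
    _ ≤ exp (log (P ^ 2) * barrierExponent P) := by
        gcongr
        exact (barrierExponent_mem_Icc hP).1
    _ = exp (1 / 2500) := by
        rw [log_pow, barrierExponent]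
        field_simp
        norm_num
    _ ≤ exp (log 2) := by gcongr; linarith [log_two_gt_d9]
    _ = 2 := exp_log two_pos

lemma rpow_slacks_le_two {E : Type*} {P U δ : ℝ} {u f : E → ℝ} (hP : 2 ≤ P)
    (hUP : U + 1 ≤ P ^ 2) (hδ1 : δ ≤ 1) (hu : ∀ e, u e ≤ U) (hf : ∀ e, -δ < f e ∧ f e < u e)
    (e : E) : (u e - f e) ^ barrierExponent P ≤ 2 ∧ (f e + δ) ^ barrierExponent P ≤ 2 := by
  obtain ⟨hf₁, hf₂⟩ := hf e
  have hue := hu e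
  exact ⟨rpow_barrierExponent_le_two hP (by linarith) (by linarith),
    rpow_barrierExponent_le_two hP (by linarith) (by linarith)⟩

namespace FlowPotential

variable {E : Type*}

/- With `k = 20 * m`, `potential k c u F δ α` is the paper's `Φ`, `barrierLength u δ α` its `ℓ`
and `potentialGrad k c u F δ α` its `g`. -/
noncomputable def barrierLength (u : E → ℝ) (δ α : ℝ) (f : E → ℝ) (e : E) : ℝ :=
  (u e - f e) ^ (-1 - α) + (f e + δ) ^ (-1 - α)

noncomputable def barrierGrad (u : E → ℝ) (δ α : ℝ) (f : E → ℝ) (e : E) : ℝ :=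
  α * (u e - f e) ^ (-1 - α) - α * (f e + δ) ^ (-1 - α)

lemma barrierLength_pos {u f : E → ℝ} {δ α : ℝ} {e : E} (hf : -δ < f e ∧ f e < u e) :
    0 < barrierLength u δ α f e := by
  have ha : 0 < u e - f e := by linarith
  have hb : 0 < f e + δ := by linarith
  unfold barrierLength
  positivity

variable [Fintype E]

noncomputable def barrier (u : E → ℝ) (δ α : ℝ) (f : E → ℝ) : ℝ :=
  ∑ e, ((u e - f e) ^ (-α) + (f e + δ) ^ (-α))

noncomputable def potential (k : ℝ) (c u : E → ℝ) (F δ α : ℝ) (f : E → ℝ) : ℝ :=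
  k * log (∑ e, c e * f e - F) + barrier u δ α f

noncomputable def potentialGrad (k : ℝ) (c u : E → ℝ) (F δ α : ℝ) (f : E → ℝ) (e : E) : ℝ :=
  k * (∑ e', c e' * f e' - F)⁻¹ * c e + barrierGrad u δ α f e

variable {u f h : E → ℝ} {δ α ε : ℝ}

lemma abs_sum_barrierGrad_mul_le (hα0 : 0 ≤ α) (hf : ∀ e, -δ < f e ∧ f e < u e) :
    |∑ e, barrierGrad u δ α f e * h e| ≤ α * ∑ e, barrierLength u δ α f e * |h e| := by
  rw [mul_sum]
  refine (abs_sum_le_sum_abs _ _).trans (sum_le_sum fun e _ => ?_)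
  have ha : 0 < u e - f e := by linarith [hf e]
  have hb : 0 < f e + δ := by linarith [hf e]
  have hgrad : |barrierGrad u δ α f e| ≤ α * barrierLength u δ α f e := by
    unfold barrierGrad barrierLength
    rw [abs_le]
    constructor <;> nlinarith [rpow_pos_of_pos ha (-1 - α), rpow_pos_of_pos hb (-1 - α)]
  rw [abs_mul, ← mul_assoc]
  gcongr

lemma barrier_step_le (hα0 : 0 ≤ α) (hα1 : α ≤ 1) (hε : ε ≤ 1 / 4)
    (hf : ∀ e, -δ < f e ∧ f e < u e) (hpow : ∀ e, (u e - f e) ^ α ≤ 2 ∧ (f e + δ) ^ α ≤ 2)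
    (hh : ∀ e, barrierLength u δ α f e * |h e| ≤ ε) :
    (∀ e, -δ < f e + h e ∧ f e + h e < u e) ∧
      barrier u δ α (f + h) ≤ barrier u δ α f + ∑ e, barrierGrad u δ α f e * h e
        + 4 * α * ε * ∑ e, barrierLength u δ α f e * |h e| := by
  have hedge : ∀ e, |h e| ≤ (u e - f e) / 2 ∧ |h e| ≤ (f e + δ) / 2 ∧
      ((u e - (f e + h e)) ^ (-α) + (f e + h e + δ) ^ (-α))
        ≤ ((u e - f e) ^ (-α) + (f e + δ) ^ (-α)) + barrierGrad u δ α f e * h e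
          + 4 * α * ε * (barrierLength u δ α f e * |h e|) := by
    intro e
    have ha : 0 < u e - f e := by linarith [hf e]
    have hb : 0 < f e + δ := by linarith [hf e]
    have hhe := hh e
    rw [barrierLength, add_mul] at hhe
    have hla := mul_nonneg (rpow_pos_of_pos ha (-1 - α)).le (abs_nonneg (h e))
    have hlb := mul_nonneg (rpow_pos_of_pos hb (-1 - α)).le (abs_nonneg (h e))
    obtain ⟨hha, hstepa⟩ := rpow_neg_step_le ha (hpow e).1 hα0 hα1 hε (h := h e) (by linarith)
    obtain ⟨hhb, hstepb⟩ :=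
      rpow_neg_step_le hb (hpow e).2 hα0 hα1 hε (h := -h e) (by rw [abs_neg]; linarith)
    rw [abs_neg] at hhb hstepb
    refine ⟨hha, hhb, ?_⟩
    rw [show u e - (f e + h e) = u e - f e - h e by ring,
      show f e + h e + δ = f e + δ - -h e by ring]
    unfold barrierGrad barrierLength
    linarith
  refine ⟨fun e => ?_, ?_⟩
  · obtain ⟨hha, hhb, -⟩ := hedge e
    constructor <;> linarith [(abs_le.1 hha).2, (abs_le.1 hhb).1, hf e]
  · calc barrier u δ α (f + h)
        ≤ ∑ e, (((u e - f e) ^ (-α) + (f e + δ) ^ (-α)) + barrierGrad u δ α f e * h e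
          + 4 * α * ε * (barrierLength u δ α f e * |h e|)) :=
          sum_le_sum fun e _ => (hedge e).2.2
      _ = _ := by rw [sum_add_distrib, sum_add_distrib, mul_sum]; rfl

theorem potential_step_le {k κ F : ℝ} {c : E → ℝ} (hk : 1 ≤ k) (hκ0 : 0 < κ) (hκ1 : κ < 1)
    (hα0 : 0 ≤ α) (hα1 : α ≤ 1) (hf : ∀ e, -δ < f e ∧ f e < u e)
    (hcost : F < ∑ e, c e * f e) (hpow : ∀ e, (u e - f e) ^ α ≤ 2 ∧ (f e + δ) ^ α ≤ 2)
    (hstep : ∑ e, barrierLength u δ α f e * |h e| ≤ κ / 25)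
    (hgrad : |∑ e, potentialGrad k c u F δ α f e * h e + κ ^ 2 / 50| ≤ κ ^ 2 / 200) :
    (∀ e, -δ < f e + h e ∧ f e + h e < u e) ∧ F < ∑ e, c e * (f e + h e) ∧
      potential k c u F δ α (f + h) ≤ potential k c u F δ α f - κ ^ 2 / 500 := by
  set S := ∑ e, c e * f e - F
  set T := ∑ e, c e * h e
  set A := ∑ e, barrierGrad u δ α f e * h e
  set K := ∑ e, barrierLength u δ α f e * |h e|
  have hS : 0 < S := sub_pos.2 hcost
  have hterm : ∀ e ∈ univ, 0 ≤ barrierLength u δ α f e * |h e| := fun e _ =>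
    mul_nonneg (barrierLength_pos (hf e)).le (abs_nonneg _)
  have hK0 : 0 ≤ K := sum_nonneg hterm
  have hαK : α * K ≤ κ / 25 := by nlinarith
  have hedge : ∀ e, barrierLength u δ α f e * |h e| ≤ κ / 25 := fun e =>
    (single_le_sum hterm (mem_univ e)).trans hstep
  obtain ⟨hfeas, hbarrier⟩ := barrier_step_le hα0 hα1 (by linarith) hf hpow hedge
  change _ ≤ _ + A + 4 * α * (κ / 25) * K at hbarrier
  have hA : |A| ≤ α * K := abs_sum_barrierGrad_mul_le hα0 hf
  have hG : ∑ e, potentialGrad k c u F δ α f e * h e = k * S⁻¹ * T + A := by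
    simp only [potentialGrad, add_mul, sum_add_distrib, S, T, A, mul_sum, mul_assoc]
  have hcost_step : ∑ e, c e * (f e + h e) - F = S + T := by
    simp only [mul_add, sum_add_distrib, S, T]
    ring
  -- `k * S⁻¹ * T` is `g(f)ᵀh - A`, and both terms are small.
  have hkT : -1 < k * S⁻¹ * T := by
    obtain ⟨hG₁, -⟩ := abs_le.1 hgrad
    obtain ⟨-, hA₂⟩ := abs_le.1 hA
    nlinarith
  have hST : 0 < S + T := by
    have hkTS : k * S⁻¹ * T * S = k * T := by field_simp
    have : -S < k * T := by linarith [mul_lt_mul_of_pos_right hkT hS]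
    rcases le_or_gt 0 T with hT | hT <;> nlinarith
  refine ⟨hfeas, by linarith, ?_⟩
  have hlog := mul_le_mul_of_nonneg_left (log_add_le_log_add_div hS hST) (by linarith : 0 ≤ k)
  have hquad : 4 * α * (κ / 25) * K ≤ 4 * κ ^ 2 / 625 := by nlinarith
  obtain ⟨-, hG₂⟩ := abs_le.1 hgrad
  show k * log (∑ e, c e * (f e + h e) - F) + barrier u δ α (f + h)
    ≤ k * log S + barrier u δ α f - κ ^ 2 / 500
  rw [hcost_step]
  rw [div_eq_inv_mul, mul_add, ← mul_assoc] at hlog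
  linarith [sq_nonneg κ]

end FlowPotential

section ApproximateData

variable {E : Type*} [Fintype E]

lemma sum_mul_abs_step_le {ℓ ℓ' g' Δ : E → ℝ} {κ η : ℝ} (hκ : 0 < κ)
    (hℓ : ∀ e, ℓ e ≤ 2 * ℓ' e) (hℓ' : ∀ e, 0 < ℓ' e) (hΔ : Δ ≠ 0)
    (hratio : (∑ e, g' e * Δ e) / (∑ e, ℓ' e * |Δ e|) ≤ -κ)
    (hη : η * ∑ e, g' e * Δ e = -κ ^ 2 / 50) :
    ∑ e, ℓ e * |η * Δ e| ≤ κ / 25 := by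
  set N := ∑ e, ℓ' e * |Δ e|
  set G := ∑ e, g' e * Δ e
  have hN : 0 < N := by
    obtain ⟨e₀, he₀⟩ := Function.ne_iff.1 hΔ
    exact sum_pos' (fun e _ => by have := hℓ' e; positivity)
      ⟨e₀, mem_univ _, mul_pos (hℓ' e₀) (abs_pos.2 he₀)⟩
  have hG : G ≤ -κ * N := (div_le_iff₀ hN).1 hratio
  have hG0 : G < 0 := by nlinarith [mul_pos hκ hN]
  have hη0 : 0 < η := by
    by_contra! hη0
    nlinarith [mul_nonneg_of_nonpos_of_nonpos hη0 hG0.le]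
  have hηN : η * N ≤ κ / 50 :=
    le_of_mul_le_mul_left (by nlinarith [mul_le_mul_of_nonneg_left hG hη0.le]) hκ
  calc ∑ e, ℓ e * |η * Δ e| ≤ ∑ e, 2 * ℓ' e * (η * |Δ e|) := sum_le_sum fun e _ => by
        rw [abs_mul, abs_of_pos hη0]
        exact mul_le_mul_of_nonneg_right (hℓ e) (by positivity)
    _ = 2 * (η * N) := by
        simp only [N, mul_sum]
        exact sum_congr rfl fun e _ => by ring
    _ ≤ κ / 25 := by linarith

lemma abs_sum_mul_sub_sum_mul_le {ℓ g g' h : E → ℝ} {ε : ℝ} (hℓ : ∀ e, 0 < ℓ e)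
    (hg : ∀ e, |(ℓ e)⁻¹ * (g' e - g e)| ≤ ε) :
    |∑ e, g e * h e - ∑ e, g' e * h e| ≤ ε * ∑ e, ℓ e * |h e| := by
  rw [← sum_sub_distrib, mul_sum]
  refine (abs_sum_le_sum_abs _ _).trans (sum_le_sum fun e _ => ?_)
  have hge : |g e - g' e| ≤ ε * ℓ e := by
    have := hg e
    rwa [abs_mul, abs_inv, abs_of_pos (hℓ e), inv_mul_le_iff₀ (hℓ e), abs_sub_comm,
      mul_comm] at this
  calc |g e * h e - g' e * h e| = |g e - g' e| * |h e| := by rw [← sub_mul, abs_mul]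
    _ ≤ ε * ℓ e * |h e| := by gcongr
    _ = ε * (ℓ e * |h e|) := mul_assoc _ _ _

lemma step_bounds_of_approx {ℓ ℓ' g g' Δ : E → ℝ} {κ η : ℝ} (hκ : 0 < κ)
    (hℓ0 : ∀ e, 0 < ℓ e) (hg : ∀ e, |(ℓ e)⁻¹ * (g' e - g e)| ≤ κ / 8)
    (hℓ : ∀ e, ℓ e ≤ 2 * ℓ' e) (hℓ' : ∀ e, 0 < ℓ' e) (hΔ : Δ ≠ 0)
    (hratio : (∑ e, g' e * Δ e) / (∑ e, ℓ' e * |Δ e|) ≤ -κ)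
    (hη : η * ∑ e, g' e * Δ e = -κ ^ 2 / 50) :
    ∑ e, ℓ e * |η * Δ e| ≤ κ / 25 ∧ |∑ e, g e * (η * Δ e) + κ ^ 2 / 50| ≤ κ ^ 2 / 200 := by
  have hstep := sum_mul_abs_step_le hκ hℓ hℓ' hΔ hratio hη
  refine ⟨hstep, ?_⟩
  have hg'step : ∑ e, g' e * (η * Δ e) = -κ ^ 2 / 50 := by
    rw [← hη, mul_sum]
    exact sum_congr rfl fun e _ => by ring
  calc |∑ e, g e * (η * Δ e) + κ ^ 2 / 50|
      = |∑ e, g e * (η * Δ e) - ∑ e, g' e * (η * Δ e)| := by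
        rw [hg'step, neg_div, sub_neg_eq_add]
    _ ≤ κ / 8 * ∑ e, ℓ e * |η * Δ e| := abs_sum_mul_sub_sum_mul_le hℓ0 hg
    _ ≤ κ / 8 * (κ / 25) := by gcongr
    _ = κ ^ 2 / 200 := by ring

end ApproximateData

open FlowPotential

theorem stmt4_general {E : Type*} [Fintype E]
    (m C U : ℤ) (hm1 : 1 ≤ m) (hC1 : 1 ≤ C) (hU1 : 1 ≤ U)
    (hmCU : 2 ≤ m * C * U)
    (c : E → ℤ)
    (u : E → ℤ) (hu : ∀ e, 1 ≤ u e ∧ u e ≤ U)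
    (F : ℤ) (α δ : ℝ)
    (hα : α = 1 / (5000 * Real.log ((m * C * U : ℤ) : ℝ)))
    (hδ : δ = 1 / (20 * (m : ℝ) ^ 2 * (C : ℝ)))
    (κ' : ℝ) (hκ'0 : 0 < κ') (hκ'1 : κ' < 1)
    -- `f` is a strictly feasible circulation with `cᵀf > F`
    (f : E → ℝ)
    (hfeas : ∀ e, -δ < f e ∧ f e < (u e : ℝ))
    (hcost : (F : ℝ) < ∑ e : E, (c e : ℝ) * f e)
    -- lengths `ℓ(f)` and gradient `g(f)`
    (ℓf gf : E → ℝ)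
    (hℓf : ∀ e, ℓf e = ((u e : ℝ) - f e) ^ (-1 - α) + (f e + δ) ^ (-1 - α))
    (hgf : ∀ e, gf e = 20 * (m : ℝ) * ((∑ e' : E, (c e' : ℝ) * f e') - (F : ℝ))⁻¹ * (c e : ℝ)
        + α * ((u e : ℝ) - f e) ^ (-1 - α) - α * (f e + δ) ^ (-1 - α))
    -- approximate gradient `g̃` and lengths `ℓ̃`
    (gt : E → ℝ) (hgt : ∀ e, |(ℓf e)⁻¹ * (gt e - gf e)| ≤ κ' / 8)
    (lt : E → ℝ) (hltpos : ∀ e, 0 < lt e)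
    (hlt : ∀ e, lt e / 2 ≤ ℓf e ∧ ℓf e ≤ 2 * lt e)
    -- the augmenting circulation `Δ` and the step size `η`
    (Δ : E → ℝ) (hΔne : Δ ≠ 0)
    (hΔratio : (∑ e : E, gt e * Δ e) / (∑ e : E, lt e * |Δ e|) ≤ -κ')
    (η : ℝ) (hη : η * (∑ e : E, gt e * Δ e) = -κ' ^ 2 / 50) :
    (∀ e, -δ < f e + η * Δ e ∧ f e + η * Δ e < (u e : ℝ))
    ∧ (F : ℝ) < ∑ e : E, (c e : ℝ) * (f e + η * Δ e)
    ∧ 20 * (m : ℝ) * Real.log ((∑ e : E, (c e : ℝ) * (f e + η * Δ e)) - (F : ℝ))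
        + ∑ e : E, (((u e : ℝ) - (f e + η * Δ e)) ^ (-α) + ((f e + η * Δ e) + δ) ^ (-α))
      ≤ (20 * (m : ℝ) * Real.log ((∑ e : E, (c e : ℝ) * f e) - (F : ℝ))
        + ∑ e : E, (((u e : ℝ) - f e) ^ (-α) + (f e + δ) ^ (-α)))
        - κ' ^ 2 / 500 := by
  have hP : (2 : ℝ) ≤ ((m * C * U : ℤ) : ℝ) := by exact_mod_cast hmCU
  have hUP : (U : ℝ) + 1 ≤ ((m * C * U : ℤ) : ℝ) ^ 2 := by
    have hUle : U ≤ m * C * U := le_mul_of_one_le_left (by omega) (by nlinarith)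
    exact_mod_cast (by nlinarith : U + 1 ≤ (m * C * U) ^ 2)
  have hδ1 : δ ≤ 1 := by
    have hm : (1 : ℝ) ≤ m := by exact_mod_cast hm1
    have hC : (1 : ℝ) ≤ C := by exact_mod_cast hC1
    rw [hδ, div_le_one (by positivity)]
    nlinarith
  have hα01 : 0 ≤ α ∧ α ≤ 1 := hα ▸ barrierExponent_mem_Icc hP
  have hpow : ∀ e, ((u e : ℝ) - f e) ^ α ≤ 2 ∧ (f e + δ) ^ α ≤ 2 :=
    hα ▸ rpow_slacks_le_two hP hUP hδ1 (fun e => by exact_mod_cast (hu e).2) hfeas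
  have hℓ : ℓf = barrierLength (fun e => (u e : ℝ)) δ α f := funext hℓf
  have hg : gf = potentialGrad (20 * m) (fun e => (c e : ℝ)) (fun e => (u e : ℝ)) F δ α f :=
    funext fun e => by rw [hgf, potentialGrad, barrierGrad]; ring
  subst hℓ hg
  obtain ⟨hstep, hgrad⟩ := step_bounds_of_approx hκ'0 (fun e => barrierLength_pos (hfeas e))
    hgt (fun e => (hlt e).2) hltpos hΔne hΔratio hη
  exact potential_step_le (by norm_cast; omega) hκ'0 hκ'1 hα01.1 hα01.2 hfeas hcost hpow hstep
    hgrad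

/-- Augmenting along a circulation `Δ` of ratio at most `−κ'` with step size `η`
satisfying `η·g̃ᵀΔ = −κ'²/50` keeps the flow strictly feasible with `cᵀ(f+ηΔ) > F`
and decreases the potential by at least `κ'²/500`. -/
theorem stmt4 {V E : Type*} [Fintype V] [Fintype E] [DecidableEq V]
    (tail head : E → V)
    (m C U : ℤ) (hm1 : 1 ≤ m) (hC1 : 1 ≤ C) (hU1 : 1 ≤ U)
    (hmE : (Fintype.card E : ℤ) ≤ m) (hmCU : 2 ≤ m * C * U)
    (c : E → ℤ) (hc : ∀ e, |c e| ≤ C)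
    (u : E → ℤ) (hu : ∀ e, 1 ≤ u e ∧ u e ≤ U)
    (F : ℤ) (α δ : ℝ)
    (hα : α = 1 / (5000 * Real.log ((m * C * U : ℤ) : ℝ)))
    (hδ : δ = 1 / (20 * (m : ℝ) ^ 2 * (C : ℝ)))
    (κ' : ℝ) (hκ'0 : 0 < κ') (hκ'1 : κ' < 1)
    -- `f` is a strictly feasible circulation with `cᵀf > F`
    (f : E → ℝ) (hcirc : IsCirculation tail head f)
    (hfeas : ∀ e, -δ < f e ∧ f e < (u e : ℝ))
    (hcost : (F : ℝ) < ∑ e : E, (c e : ℝ) * f e)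
    -- lengths `ℓ(f)` and gradient `g(f)`
    (ℓf gf : E → ℝ)
    (hℓf : ∀ e, ℓf e = ((u e : ℝ) - f e) ^ (-1 - α) + (f e + δ) ^ (-1 - α))
    (hgf : ∀ e, gf e = 20 * (m : ℝ) * ((∑ e' : E, (c e' : ℝ) * f e') - (F : ℝ))⁻¹ * (c e : ℝ)
        + α * ((u e : ℝ) - f e) ^ (-1 - α) - α * (f e + δ) ^ (-1 - α))
    -- approximate gradient `g̃` and lengths `ℓ̃`
    (gt : E → ℝ) (hgt : ∀ e, |(ℓf e)⁻¹ * (gt e - gf e)| ≤ κ' / 8)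
    (lt : E → ℝ) (hltpos : ∀ e, 0 < lt e)
    (hlt : ∀ e, lt e / 2 ≤ ℓf e ∧ ℓf e ≤ 2 * lt e)
    -- the augmenting circulation `Δ` and the step size `η`
    (Δ : E → ℝ) (hΔcirc : IsCirculation tail head Δ) (hΔne : Δ ≠ 0)
    (hΔratio : (∑ e : E, gt e * Δ e) / (∑ e : E, lt e * |Δ e|) ≤ -κ')
    (η : ℝ) (hη : η * (∑ e : E, gt e * Δ e) = -κ' ^ 2 / 50) :
    (∀ e, -δ < f e + η * Δ e ∧ f e + η * Δ e < (u e : ℝ))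
    ∧ (F : ℝ) < ∑ e : E, (c e : ℝ) * (f e + η * Δ e)
    ∧ 20 * (m : ℝ) * Real.log ((∑ e : E, (c e : ℝ) * (f e + η * Δ e)) - (F : ℝ))
        + ∑ e : E, (((u e : ℝ) - (f e + η * Δ e)) ^ (-α) + ((f e + η * Δ e) + δ) ^ (-α))
      ≤ (20 * (m : ℝ) * Real.log ((∑ e : E, (c e : ℝ) * f e) - (F : ℝ))
        + ∑ e : E, (((u e : ℝ) - f e) ^ (-α) + (f e + δ) ^ (-α)))
        - κ' ^ 2 / 500 :=
  stmt4_general m C U hm1 hC1 hU1 hmCU c u hu F α δ hα hδ κ' hκ'0 hκ'1 f hfeas hcost ℓf gf hℓf hgf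
    gt hgt lt hltpos hlt Δ hΔne hΔratio η hη
end

section
/- Let ε ∈ (0, 1/2] and κ' ∈ (0,1). Let f ∈ ℝ^E be a strictly feasible circulation with cᵀf > F, let g̃ ∈ ℝ^E satisfy ‖L(f)^{−1}(g̃ − g(f))‖_∞ ≤ ε, and let ℓ̃ ∈ ℝ^E with ℓ̃ > 0 satisfy ℓ̃ ≈₂ ℓ(f), with L̃ = diag(ℓ̃). If Δ ∈ ℝ^E is a nonzero circulation with g̃ᵀΔ / ‖L̃Δ‖₁ ≤ −κ', then |cᵀΔ| / (cᵀf − F) ≤ |g̃ᵀΔ| / (κ'·m). -/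
/-!
Write `S = cᵀf − F`, `A = (u − f)^(−1−α)` and `B = (f + δ)^(−1−α)`. Then
`g(f) = (20m/S)·c + α(A − B)` while `ℓ(f) = A + B ≥ |A − B|`, so, as `ε + α ≤ 1`, the
rescaled cost vector `(20m/S)·c` lies entrywise within `ℓ(f) ≤ 2ℓ̃` of `g̃`. Hence
`(20m/S)·|cᵀΔ| ≤ |g̃ᵀΔ| + 2‖L̃Δ‖₁ ≤ (1 + 2/κ')·|g̃ᵀΔ| ≤ 3|g̃ᵀΔ|/κ'`.
-/

open Finset

lemma abs_sum_mul_le_abs_sum_mul_add {E : Type*} [Fintype E] {x y w Δ : E → ℝ}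
    (hxy : ∀ e, |x e - y e| ≤ w e) :
    |∑ e, x e * Δ e| ≤ |∑ e, y e * Δ e| + ∑ e, w e * |Δ e| := by
  have hsplit : ∑ e, x e * Δ e = ∑ e, y e * Δ e + ∑ e, (x e - y e) * Δ e := by
    rw [← sum_add_distrib]; exact sum_congr rfl fun e _ => by ring
  have herr : |∑ e, (x e - y e) * Δ e| ≤ ∑ e, w e * |Δ e| :=
    (abs_sum_le_sum_abs _ _).trans <| sum_le_sum fun e _ => by
      rw [abs_mul]; exact mul_le_mul_of_nonneg_right (hxy e) (abs_nonneg _)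
  rw [hsplit]
  exact (abs_add_le _ _).trans (by linarith)

lemma sum_mul_abs_pos {E : Type*} [Fintype E] {w Δ : E → ℝ} (hw : ∀ e, 0 < w e)
    (hΔ : Δ ≠ 0) : 0 < ∑ e, w e * |Δ e| := by
  obtain ⟨e₀, he₀⟩ := Function.ne_iff.mp hΔ
  exact sum_pos' (fun e _ => by have := hw e; positivity)
    ⟨e₀, mem_univ _, mul_pos (hw e₀) (abs_pos.mpr he₀)⟩

lemma one_div_mul_log_mem_Ioc {x : ℝ} (hx : 2 ≤ x) :
    1 / (5000 * Real.log x) ∈ Set.Ioc 0 (1 / 2) := by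
  have hlog : 1 / 2 < Real.log x := by
    linarith [Real.log_two_gt_d9, Real.log_le_log two_pos hx]
  refine ⟨by positivity, ?_⟩
  rw [div_le_div_iff₀ (by linarith) two_pos]
  linarith

lemma mul_le_abs_of_div_le_neg {G L κ : ℝ} (hL : 0 < L) (h : G / L ≤ -κ) : κ * L ≤ |G| := by
  rw [div_le_iff₀ hL] at h
  linarith [neg_le_abs G]

lemma abs_sub_le_of_barrier_gradient {A B α ε k g gt : ℝ} (hA : 0 < A) (hB : 0 < B)
    (hα : 0 ≤ α) (hεα : ε + α ≤ 1) (hg : g = k + α * (A - B))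
    (hgt : |(A + B)⁻¹ * (gt - g)| ≤ ε) : |k - gt| ≤ A + B := by
  have hgt' : |g - gt| ≤ ε * (A + B) := by
    rwa [abs_mul, abs_inv, abs_of_pos (add_pos hA hB), inv_mul_le_iff₀ (add_pos hA hB),
      abs_sub_comm, mul_comm] at hgt
  have hAB : α * |A - B| ≤ α * (A + B) :=
    mul_le_mul_of_nonneg_left
      ((abs_sub _ _).trans_eq (by rw [abs_of_pos hA, abs_of_pos hB])) hα
  calc |k - gt| = |(g - gt) - α * (A - B)| := by rw [hg]; ring_nf
    _ ≤ |g - gt| + α * |A - B| := (abs_sub _ _).trans_eq (by rw [abs_mul, abs_of_nonneg hα])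
    _ ≤ (ε + α) * (A + B) := by linarith
    _ ≤ A + B := by nlinarith

theorem stmt5_general {E : Type*} [Fintype E]
    (m C U : ℤ) (hm1 : 1 ≤ m) (hmCU : 2 ≤ m * C * U)
    (c : E → ℤ)
    (u : E → ℤ)
    (F : ℤ) (α δ : ℝ)
    (hα : α = 1 / (5000 * Real.log ((m * C * U : ℤ) : ℝ)))
    (ε : ℝ) (hε : ε ≤ 1 / 2)
    (κ' : ℝ) (hκ'0 : 0 < κ') (hκ'1 : κ' < 1)
    -- `f` is a strictly feasible circulation with `cᵀf > F`
    (f : E → ℝ)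
    (hfeas : ∀ e, -δ < f e ∧ f e < (u e : ℝ))
    (hcost : (F : ℝ) < ∑ e : E, (c e : ℝ) * f e)
    -- lengths `ℓ(f)` and gradient `g(f)`
    (ℓf gf : E → ℝ)
    (hℓf : ∀ e, ℓf e = ((u e : ℝ) - f e) ^ (-1 - α) + (f e + δ) ^ (-1 - α))
    (hgf : ∀ e, gf e = 20 * (m : ℝ) * ((∑ e' : E, (c e' : ℝ) * f e') - (F : ℝ))⁻¹ * (c e : ℝ)
        + α * ((u e : ℝ) - f e) ^ (-1 - α) - α * (f e + δ) ^ (-1 - α))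
    -- approximate gradient `g̃` and lengths `ℓ̃`
    (gt : E → ℝ) (hgt : ∀ e, |(ℓf e)⁻¹ * (gt e - gf e)| ≤ ε)
    (lt : E → ℝ) (hltpos : ∀ e, 0 < lt e)
    (hlt : ∀ e, lt e / 2 ≤ ℓf e ∧ ℓf e ≤ 2 * lt e)
    -- the circulation `Δ` of ratio at most `−κ'`
    (Δ : E → ℝ) (hΔne : Δ ≠ 0)
    (hΔratio : (∑ e : E, gt e * Δ e) / (∑ e : E, lt e * |Δ e|) ≤ -κ') :
    |∑ e : E, (c e : ℝ) * Δ e| / ((∑ e : E, (c e : ℝ) * f e) - (F : ℝ))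
      ≤ |∑ e : E, gt e * Δ e| / (κ' * (m : ℝ)) := by
  set S := (∑ e : E, (c e : ℝ) * f e) - (F : ℝ)
  have hS : 0 < S := sub_pos.mpr hcost
  have hm : (0 : ℝ) < m := by exact_mod_cast hm1
  obtain ⟨hα0, hα_le⟩ : 0 < α ∧ α ≤ 1 / 2 :=
    hα ▸ one_div_mul_log_mem_Ioc (by exact_mod_cast hmCU)
  have hκL1 := mul_le_abs_of_div_le_neg (sum_mul_abs_pos hltpos hΔne) hΔratio
  have hclose : ∀ e, |20 * m / S * c e - gt e| ≤ 2 * lt e := fun e =>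
    (abs_sub_le_of_barrier_gradient (Real.rpow_pos_of_pos (by linarith [hfeas e]) _)
      (Real.rpow_pos_of_pos (by linarith [hfeas e]) _) hα0.le (by linarith)
      (by rw [hgf e]; ring) (hℓf e ▸ hgt e)).trans ((hℓf e).symm ▸ (hlt e).2)
  have hrescaled : |∑ e, 20 * m / S * c e * Δ e|
      ≤ |∑ e, gt e * Δ e| + 2 * ∑ e, lt e * |Δ e| := by
    refine (abs_sum_mul_le_abs_sum_mul_add hclose).trans_eq ?_
    simp only [mul_sum, mul_assoc]
  have hcΔ : ∑ e, (c e : ℝ) * Δ e = S / (20 * m) * ∑ e, 20 * m / S * c e * Δ e := by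
    rw [mul_sum]; exact sum_congr rfl fun e _ => by field_simp
  have hκX : κ' * |∑ e, 20 * m / S * c e * Δ e| ≤ 3 * |∑ e, gt e * Δ e| := by
    nlinarith [mul_le_mul_of_nonneg_left hrescaled hκ'0.le, abs_nonneg (∑ e, gt e * Δ e)]
  calc |∑ e, (c e : ℝ) * Δ e| / S = |∑ e, 20 * m / S * c e * Δ e| / (20 * m) := by
        rw [hcΔ, abs_mul, abs_of_pos (by positivity)]; field_simp
    _ ≤ |∑ e, gt e * Δ e| / (κ' * m) := by
        rw [div_le_div_iff₀ (by positivity) (by positivity)]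
        nlinarith [mul_le_mul_of_nonneg_right hκX hm.le, abs_nonneg (∑ e, gt e * Δ e)]

/-- Residual stability: if `Δ` is a nonzero circulation whose ratio with respect to
approximate gradients and lengths is at most `−κ'`, then
`|cᵀΔ|/(cᵀf − F) ≤ |g̃ᵀΔ|/(κ'·m)`. -/
theorem stmt5 {V E : Type*} [Fintype V] [Fintype E] [DecidableEq V]
    (tail head : E → V)
    (m C U : ℤ) (hm1 : 1 ≤ m) (hC1 : 1 ≤ C) (hU1 : 1 ≤ U)
    (hmE : (Fintype.card E : ℤ) ≤ m) (hmCU : 2 ≤ m * C * U)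
    (c : E → ℤ) (hc : ∀ e, |c e| ≤ C)
    (u : E → ℤ) (hu : ∀ e, 1 ≤ u e ∧ u e ≤ U)
    (F : ℤ) (α δ : ℝ)
    (hα : α = 1 / (5000 * Real.log ((m * C * U : ℤ) : ℝ)))
    (hδ : δ = 1 / (20 * (m : ℝ) ^ 2 * (C : ℝ)))
    (ε : ℝ) (hε0 : 0 < ε) (hε : ε ≤ 1 / 2)
    (κ' : ℝ) (hκ'0 : 0 < κ') (hκ'1 : κ' < 1)
    -- `f` is a strictly feasible circulation with `cᵀf > F`
    (f : E → ℝ) (hcirc : IsCirculation tail head f)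
    (hfeas : ∀ e, -δ < f e ∧ f e < (u e : ℝ))
    (hcost : (F : ℝ) < ∑ e : E, (c e : ℝ) * f e)
    -- lengths `ℓ(f)` and gradient `g(f)`
    (ℓf gf : E → ℝ)
    (hℓf : ∀ e, ℓf e = ((u e : ℝ) - f e) ^ (-1 - α) + (f e + δ) ^ (-1 - α))
    (hgf : ∀ e, gf e = 20 * (m : ℝ) * ((∑ e' : E, (c e' : ℝ) * f e') - (F : ℝ))⁻¹ * (c e : ℝ)
        + α * ((u e : ℝ) - f e) ^ (-1 - α) - α * (f e + δ) ^ (-1 - α))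
    -- approximate gradient `g̃` and lengths `ℓ̃`
    (gt : E → ℝ) (hgt : ∀ e, |(ℓf e)⁻¹ * (gt e - gf e)| ≤ ε)
    (lt : E → ℝ) (hltpos : ∀ e, 0 < lt e)
    (hlt : ∀ e, lt e / 2 ≤ ℓf e ∧ ℓf e ≤ 2 * lt e)
    -- the circulation `Δ` of ratio at most `−κ'`
    (Δ : E → ℝ) (hΔcirc : IsCirculation tail head Δ) (hΔne : Δ ≠ 0)
    (hΔratio : (∑ e : E, gt e * Δ e) / (∑ e : E, lt e * |Δ e|) ≤ -κ') :
    |∑ e : E, (c e : ℝ) * Δ e| / ((∑ e : E, (c e : ℝ) * f e) - (F : ℝ))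
      ≤ |∑ e : E, gt e * Δ e| / (κ' * (m : ℝ)) :=
  stmt5_general m C U hm1 hmCU c u F α δ hα ε hε κ' hκ'0 hκ'1 f hfeas hcost ℓf gf hℓf hgf gt hgt lt
    hltpos hlt Δ hΔne hΔratio
end

section
/- Let f, f̄ ∈ ℝ^E both be strictly feasible, and suppose ‖L(f)(f − f̄)‖_∞ ≤ ε for some ε ∈ (0, 1/100]. Then ℓ(f) ≈_{1+3ε} ℓ(f̄), i.e., (1+3ε)^{−1}·ℓ(f)_e ≤ ℓ(f̄)_e ≤ (1+3ε)·ℓ(f)_e for every e ∈ E. -/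
private lemma sq_bound' {M x : ℝ} (hM2 : 2 ≤ M) (hx : x ≤ M + 1) : x ≤ M*M := by nlinarith

private lemma inv_rpow_bound {α ε : ℝ} (hα0 : 0 < α) (hα1 : α ≤ 1)
    (hε0 : 0 < ε) (hε : ε ≤ 1/100) {a A : ℝ} (ha : 0 < a)
    (hlow : (1 - (2500/2499)*ε)*a ≤ A) (hhigh : A ≤ (1 + (2500/2499)*ε)*a) :
    (1+3*ε)⁻¹ * a ^ (-1-α) ≤ A ^ (-1-α) ∧ A ^ (-1-α) ≤ (1+3*ε) * a ^ (-1-α) := by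
  have hfac : (0:ℝ) < 1 - (2500/2499)*ε := by nlinarith
  have hA : 0 < A := lt_of_lt_of_le (by positivity) hlow
  have hp0 : (0:ℝ) ≤ 1 + α := by linarith
  have hXa : (0:ℝ) < a ^ (1+α) := Real.rpow_pos_of_pos ha _
  have hXA : (0:ℝ) < A ^ (1+α) := Real.rpow_pos_of_pos hA _
  have h3e : (0:ℝ) < 1 + 3*ε := by linarith
  have hlow' : (1 - (2500/2499)*ε) ^ ((1:ℝ)+α) * a ^ (1+α) ≤ A ^ (1+α) := by
    rw [← Real.mul_rpow hfac.le ha.le]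
    exact Real.rpow_le_rpow (by positivity) hlow hp0
  have hhigh' : A ^ (1+α) ≤ (1 + (2500/2499)*ε) ^ ((1:ℝ)+α) * a ^ (1+α) := by
    rw [← Real.mul_rpow (by positivity) ha.le]
    exact Real.rpow_le_rpow hA.le hhigh hp0
  have h1 : (1 - (2500/2499)*ε) ^ ((2:ℕ):ℝ) ≤ (1 - (2500/2499)*ε) ^ ((1:ℝ)+α) :=
    Real.rpow_le_rpow_of_exponent_ge hfac (by nlinarith) (by push_cast; linarith)
  have h2 : (1 + (2500/2499)*ε) ^ ((1:ℝ)+α) ≤ (1 + (2500/2499)*ε) ^ ((2:ℕ):ℝ) :=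
    Real.rpow_le_rpow_of_exponent_le (by nlinarith) (by push_cast; linarith)
  have hsq1 : (1 - (2500/2499)*ε) ^ ((2:ℕ):ℝ)
      = (1 - (2500/2499)*ε) * (1 - (2500/2499)*ε) := by
    rw [Real.rpow_natCast]; ring
  have hsq2 : (1 + (2500/2499)*ε) ^ ((2:ℕ):ℝ)
      = (1 + (2500/2499)*ε) * (1 + (2500/2499)*ε) := by
    rw [Real.rpow_natCast]; ring
  rw [hsq1] at h1; rw [hsq2] at h2
  have hnum1 : (1:ℝ) ≤ (1+3*ε) * ((1 - (2500/2499)*ε) * (1 - (2500/2499)*ε)) := by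
    nlinarith [mul_nonneg hε0.le (by linarith : (0:ℝ) ≤ 1/100 - ε),
      mul_nonneg (mul_nonneg hε0.le hε0.le) hε0.le,
      mul_nonneg (mul_nonneg hε0.le hε0.le) (by linarith : (0:ℝ) ≤ 1/100 - ε)]
  have hnum2 : (1 + (2500/2499)*ε) * (1 + (2500/2499)*ε) ≤ 1+3*ε := by nlinarith
  -- upper bound on A^(1+α)
  have hup : A ^ (1+α) ≤ (1+3*ε) * a ^ (1+α) := by
    calc A ^ (1+α) ≤ (1 + (2500/2499)*ε) ^ ((1:ℝ)+α) * a ^ (1+α) := hhigh'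
      _ ≤ ((1 + (2500/2499)*ε) * (1 + (2500/2499)*ε)) * a ^ (1+α) :=
          mul_le_mul_of_nonneg_right h2 hXa.le
      _ ≤ (1+3*ε) * a ^ (1+α) := mul_le_mul_of_nonneg_right hnum2 hXa.le
  -- lower bound: a^(1+α) ≤ (1+3ε) A^(1+α)
  have hdown : a ^ (1+α) ≤ (1+3*ε) * A ^ (1+α) := by
    have s1 : ((1 - (2500/2499)*ε) * (1 - (2500/2499)*ε)) * a ^ (1+α)
        ≤ A ^ (1+α) := le_trans (mul_le_mul_of_nonneg_right h1 hXa.le) hlow'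
    calc a ^ (1+α) = 1 * a ^ (1+α) := (one_mul _).symm
      _ ≤ ((1+3*ε) * ((1 - (2500/2499)*ε) * (1 - (2500/2499)*ε))) * a ^ (1+α) :=
          mul_le_mul_of_nonneg_right hnum1 hXa.le
      _ = (1+3*ε) * (((1 - (2500/2499)*ε) * (1 - (2500/2499)*ε)) * a ^ (1+α)) := by
          ring
      _ ≤ (1+3*ε) * A ^ (1+α) := mul_le_mul_of_nonneg_left s1 h3e.le
  have hrwa : a ^ (-1-α) = (a ^ (1+α))⁻¹ := by
    rw [show (-1-α : ℝ) = -(1+α) by ring, Real.rpow_neg ha.le]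
  have hrwA : A ^ (-1-α) = (A ^ (1+α))⁻¹ := by
    rw [show (-1-α : ℝ) = -(1+α) by ring, Real.rpow_neg hA.le]
  rw [hrwa, hrwA]
  constructor
  · rw [← mul_inv]
    apply inv_anti₀ hXA
    exact hup
  · rw [show (1+3*ε) * (a ^ (1+α))⁻¹ = ((1+3*ε)⁻¹ * a ^ (1+α))⁻¹ by
      rw [mul_inv, inv_inv]]
    apply inv_anti₀ (by positivity)
    rw [inv_mul_le_iff₀ h3e]
    exact hdown

set_option maxHeartbeats 1000000 in
/-- Length stability: if `‖L(f)(f − f̄)‖_∞ ≤ ε` for `ε ∈ (0, 1/100]`, then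
`ℓ(f) ≈_{1+3ε} ℓ(f̄)` entrywise. -/
theorem stmt6 {E : Type*} [Fintype E]
    (m C U : ℤ) (hm1 : 1 ≤ m) (hC1 : 1 ≤ C) (hU1 : 1 ≤ U)
    (hmE : (Fintype.card E : ℤ) ≤ m) (hmCU : 2 ≤ m * C * U)
    (c : E → ℤ) (hc : ∀ e, |c e| ≤ C)
    (u : E → ℤ) (hu : ∀ e, 1 ≤ u e ∧ u e ≤ U)
    (F : ℤ) (α δ : ℝ)
    (hα : α = 1 / (5000 * Real.log ((m * C * U : ℤ) : ℝ)))
    (hδ : δ = 1 / (20 * (m : ℝ) ^ 2 * (C : ℝ)))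
    -- `f` and `f̄` are strictly feasible
    (f fbar : E → ℝ)
    (hfeas : ∀ e, -δ < f e ∧ f e < (u e : ℝ))
    (hfeasbar : ∀ e, -δ < fbar e ∧ fbar e < (u e : ℝ))
    -- lengths `ℓ(f)` and `ℓ(f̄)`
    (ℓf ℓfbar : E → ℝ)
    (hℓf : ∀ e, ℓf e = ((u e : ℝ) - f e) ^ (-1 - α) + (f e + δ) ^ (-1 - α))
    (hℓfbar : ∀ e, ℓfbar e = ((u e : ℝ) - fbar e) ^ (-1 - α) + (fbar e + δ) ^ (-1 - α))
    (ε : ℝ) (hε0 : 0 < ε) (hε : ε ≤ 1 / 100)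
    (hclose : ∀ e, |ℓf e * (f e - fbar e)| ≤ ε) :
    ∀ e, (1 + 3 * ε)⁻¹ * ℓf e ≤ ℓfbar e ∧ ℓfbar e ≤ (1 + 3 * ε) * ℓf e := by
  have hm0 : (0:ℝ) < (m:ℝ) := by exact_mod_cast hm1
  have hC0 : (0:ℝ) < (C:ℝ) := by exact_mod_cast hC1
  have hm1R : (1:ℝ) ≤ (m:ℝ) := by exact_mod_cast hm1
  have hC1R : (1:ℝ) ≤ (C:ℝ) := by exact_mod_cast hC1
  have hM2 : (2:ℝ) ≤ ((m * C * U : ℤ) : ℝ) := by exact_mod_cast hmCU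
  set M : ℝ := ((m * C * U : ℤ) : ℝ) with hMdef
  have hM0 : (0:ℝ) < M := by linarith
  have hlogM : 0 < Real.log M := Real.log_pos (by linarith)
  have hα0 : 0 < α := by rw [hα]; positivity
  have hαM : α * Real.log M = 1/5000 := by rw [hα]; field_simp
  have hlog2 : Real.log 2 ≤ Real.log M := Real.log_le_log (by norm_num) hM2
  have hα1 : α ≤ 1 := by
    rw [hα, div_le_one (by positivity)]
    nlinarith [Real.log_two_gt_d9]
  have hδpos : 0 < δ := by rw [hδ]; positivity
  have hδle : δ ≤ 1/20 := by
    have hm2 : (1:ℝ) ≤ (m:ℝ)^2 := by nlinarith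
    have hm3 : (1:ℝ) ≤ (m:ℝ)^2 * (C:ℝ) := by nlinarith
    rw [hδ, div_le_div_iff₀ (by positivity) (by norm_num)]
    nlinarith
  have hexp2500 : Real.exp (1/2500) ≤ 2500/2499 := by
    have h := Real.add_one_le_exp (-(1/2500):ℝ)
    have h2 : (2499/2500:ℝ) ≤ Real.exp (-(1/2500)) := by linarith
    rw [Real.exp_neg] at h2
    have hpos : 0 < Real.exp (1/2500:ℝ) := Real.exp_pos _
    have h4 : (2499/2500:ℝ) * Real.exp (1/2500) ≤ 1 := by
      have := mul_le_mul_of_nonneg_right h2 hpos.le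
      rwa [inv_mul_cancel₀ (ne_of_gt hpos)] at this
    linarith
  have hK : ∀ x : ℝ, 0 < x → x ≤ M*M → x ^ α ≤ 2500/2499 := by
    intro x hx hxM
    rw [Real.rpow_def_of_pos hx]
    have h1 : Real.log x ≤ Real.log (M*M) := Real.log_le_log hx hxM
    have h2 : Real.log (M*M) = Real.log M + Real.log M :=
      Real.log_mul (by positivity) (by positivity)
    have h3 : Real.log x * α ≤ 1/2500 := by
      have : Real.log x * α ≤ (Real.log M + Real.log M) * α := by
        apply mul_le_mul_of_nonneg_right _ hα0.le
        rw [← h2]; exact h1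
      calc Real.log x * α ≤ (Real.log M + Real.log M) * α := this
        _ = 2*(α * Real.log M) := by ring
        _ = 1/2500 := by rw [hαM]; norm_num
    calc Real.exp (Real.log x * α) ≤ Real.exp (1/2500) := Real.exp_le_exp.mpr h3
      _ ≤ 2500/2499 := hexp2500
  have hUM : (U:ℝ) ≤ M := by
    rw [hMdef]
    have h1 : (1:ℤ) ≤ m * C := by nlinarith
    have : (U:ℤ) ≤ m * C * U := by nlinarith [mul_le_mul_of_nonneg_right h1 (by linarith : (0:ℤ) ≤ U)]
    exact_mod_cast this
  intro e
  obtain ⟨hf1, hf2⟩ := hfeas e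
  obtain ⟨hg1, hg2⟩ := hfeasbar e
  have ha : 0 < (u e : ℝ) - f e := by linarith
  have hb : 0 < f e + δ := by linarith
  have hUe : (u e : ℝ) ≤ (U:ℝ) := by exact_mod_cast (hu e).2
  have haM : (u e : ℝ) - f e ≤ M*M := sq_bound' hM2 (by linarith)
  have hbM : f e + δ ≤ M*M := sq_bound' hM2 (by linarith)
  have hℓfe : ℓf e = ((u e : ℝ) - f e) ^ (-1-α) + (f e + δ) ^ (-1-α) := by
    rw [hℓf e]
  have hℓpos : 0 < ℓf e := by
    rw [hℓfe]
    exact add_pos (Real.rpow_pos_of_pos ha _) (Real.rpow_pos_of_pos hb _)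
  have hcl := hclose e
  rw [abs_mul, abs_of_pos hℓpos] at hcl
  have hbnd : ∀ x : ℝ, 0 < x → x ^ (-1-α) ≤ ℓf e → x ≤ M*M →
      |f e - fbar e| ≤ (2500/2499) * ε * x := by
    intro x hx hxle hxM
    have h1 : x ^ (-1-α) * |f e - fbar e| ≤ ε :=
      le_trans (mul_le_mul_of_nonneg_right hxle (abs_nonneg _)) hcl
    have hx1 : x ^ ((1:ℝ)+α) * x ^ (-1-α) = 1 := by
      rw [← Real.rpow_add hx]; norm_num
    have h2 : |f e - fbar e| ≤ x ^ ((1:ℝ)+α) * ε := by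
      calc |f e - fbar e| = x ^ ((1:ℝ)+α) * (x ^ (-1-α) * |f e - fbar e|) := by
            rw [← mul_assoc, hx1, one_mul]
        _ ≤ x ^ ((1:ℝ)+α) * ε :=
            mul_le_mul_of_nonneg_left h1 (Real.rpow_pos_of_pos hx _).le
    have h3 : x ^ ((1:ℝ)+α) ≤ (2500/2499) * x := by
      have hx2 : x ^ ((1:ℝ)+α) = x * x ^ α := by
        rw [Real.rpow_add hx, Real.rpow_one]
      rw [hx2]
      calc x * x ^ α ≤ x * (2500/2499) := mul_le_mul_of_nonneg_left (hK x hx hxM) hx.le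
        _ = (2500/2499) * x := mul_comm _ _
    calc |f e - fbar e| ≤ x ^ ((1:ℝ)+α) * ε := h2
      _ ≤ ((2500/2499) * x) * ε := mul_le_mul_of_nonneg_right h3 hε0.le
      _ = (2500/2499) * ε * x := by ring
  have hda := hbnd ((u e : ℝ) - f e) ha
    (by rw [hℓfe]; linarith [Real.rpow_pos_of_pos hb (-1-α)]) haM
  have hdb := hbnd (f e + δ) hb
    (by rw [hℓfe]; linarith [Real.rpow_pos_of_pos ha (-1-α)]) hbM
  rw [abs_le] at hda hdb
  have h1 := inv_rpow_bound hα0 hα1 hε0 hε ha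
    (show (1 - (2500/2499)*ε)*((u e : ℝ) - f e) ≤ (u e : ℝ) - fbar e by nlinarith [hda.1])
    (show (u e : ℝ) - fbar e ≤ (1 + (2500/2499)*ε)*((u e : ℝ) - f e) by nlinarith [hda.2])
  have h2 := inv_rpow_bound hα0 hα1 hε0 hε hb
    (show (1 - (2500/2499)*ε)*(f e + δ) ≤ fbar e + δ by nlinarith [hdb.2])
    (show fbar e + δ ≤ (1 + (2500/2499)*ε)*(f e + δ) by nlinarith [hdb.1])
  rw [hℓf e, hℓfbar e]
  constructor
  · rw [mul_add]; exact add_le_add h1.1 h2.1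
  · rw [mul_add]; exact add_le_add h1.2 h2.2
end

section
/- Let f, f̄ ∈ ℝ^E both be strictly feasible with cᵀf̄ > F, suppose ‖L(f)(f − f̄)‖_∞ ≤ ε for some ε ∈ (0, 1/100], and let r > 0 satisfy r ≈_{1+ε} cᵀf̄ − F. Define g̃ ∈ ℝ^E by g̃_e = (r / (cᵀf̄ − F)) · (20·m·c_e/r + α·(u_e − f_e)^{−1−α} − α·(f_e + δ)^{−1−α}) for every e ∈ E. Then ‖L(f)^{−1}(g̃ − g(f̄))‖_∞ ≤ 10·α·ε. -/
set_option maxHeartbeats 1000000 in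
open Real in
lemma pert_aux7 {x y α ε : ℝ} (hx : 0 < x) (hy : 0 < y)
    (hα0 : 0 < α) (hα1 : α ≤ 1/1000)
    (hε0 : 0 < ε) (hε1 : ε ≤ 1/100)
    (hxa : x ^ α ≤ 1.001)
    (hxy : |x - y| ≤ ε * x ^ (1 + α)) :
    |x ^ (-(1 + α)) - y ^ (-(1 + α))| ≤ 3 * ε * x ^ (-(1 + α)) := by
  have hx1a : x ^ (1 + α) = x * x ^ α := by
    rw [Real.rpow_add hx, Real.rpow_one]
  set s : ℝ := 1.001 * ε with hs_def
  have hs0 : 0 < s := by positivity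
  have hs1 : s ≤ 0.011 := by rw [hs_def]; nlinarith
  have hxy' : |x - y| ≤ s * x := by
    have : ε * x ^ (1 + α) ≤ s * x := by
      rw [hx1a, hs_def]
      nlinarith [mul_le_mul_of_nonneg_left hxa (by positivity : (0:ℝ) ≤ ε * x)]
    linarith
  have habs := abs_le.mp hxy'
  have hylb : (1 - s) * x ≤ y := by nlinarith [habs.2]
  have hyub : y ≤ (1 + s) * x := by nlinarith [habs.1]
  have hp : -(1 + α) ≤ 0 := by linarith
  have hxp : 0 < x ^ (-(1 + α)) := Real.rpow_pos_of_pos hx _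
  have h1s : 0 < 1 - s := by linarith
  -- upper bound: y^p ≤ (1-s)^p x^p ≤ (1+3ε) x^p
  have hupper : y ^ (-(1 + α)) ≤ (1 + 3 * ε) * x ^ (-(1 + α)) := by
    have h1 : y ^ (-(1 + α)) ≤ ((1 - s) * x) ^ (-(1 + α)) :=
      Real.rpow_le_rpow_of_nonpos (by positivity) hylb hp
    have h2 : ((1 - s) * x) ^ (-(1 + α)) = (1 - s) ^ (-(1 + α)) * x ^ (-(1 + α)) :=
      Real.mul_rpow h1s.le hx.le
    have h3 : (1 - s) ^ (-(1 + α)) ≤ (1 - s) ^ (-2 : ℝ) :=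
      Real.rpow_le_rpow_of_exponent_ge h1s (by linarith) (by linarith)
    have h4 : (1 - s) ^ (-2 : ℝ) = ((1 - s) ^ 2)⁻¹ := by
      rw [Real.rpow_neg h1s.le]
      norm_num [Real.rpow_natCast (1 - s) 2]
    have h5 : ((1 - s) ^ 2)⁻¹ ≤ 1 + 3 * ε := by
      rw [show ((1 - s) ^ 2)⁻¹ = 1 / ((1 - s) ^ 2) from (one_div _).symm,
        div_le_iff₀ (by positivity)]
      rw [hs_def] at hs1 ⊢
      nlinarith [sq_nonneg ε, mul_nonneg hε0.le hε0.le]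
    calc y ^ (-(1 + α)) ≤ (1 - s) ^ (-(1 + α)) * x ^ (-(1 + α)) := by rw [← h2]; exact h1
      _ ≤ (1 + 3 * ε) * x ^ (-(1 + α)) := by
          apply mul_le_mul_of_nonneg_right _ hxp.le
          calc (1 - s) ^ (-(1 + α)) ≤ (1 - s) ^ (-2 : ℝ) := h3
            _ = ((1 - s) ^ 2)⁻¹ := h4
            _ ≤ 1 + 3 * ε := h5
  have hlower : (1 - 3 * ε) * x ^ (-(1 + α)) ≤ y ^ (-(1 + α)) := by
    have h1 : ((1 + s) * x) ^ (-(1 + α)) ≤ y ^ (-(1 + α)) :=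
      Real.rpow_le_rpow_of_nonpos hy hyub hp
    have h2 : ((1 + s) * x) ^ (-(1 + α)) = (1 + s) ^ (-(1 + α)) * x ^ (-(1 + α)) :=
      Real.mul_rpow (by linarith) hx.le
    have h3 : (1 + s) ^ (-2 : ℝ) ≤ (1 + s) ^ (-(1 + α)) :=
      Real.rpow_le_rpow_of_exponent_le (by linarith) (by linarith)
    have h4 : (1 + s) ^ (-2 : ℝ) = ((1 + s) ^ 2)⁻¹ := by
      rw [Real.rpow_neg (by linarith)]
      norm_num [Real.rpow_natCast (1 + s) 2]
    have h5 : 1 - 3 * ε ≤ ((1 + s) ^ 2)⁻¹ := by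
      rw [show ((1 + s) ^ 2)⁻¹ = 1 / ((1 + s) ^ 2) from (one_div _).symm,
        le_div_iff₀ (by positivity)]
      rw [hs_def] at hs1 ⊢
      nlinarith [sq_nonneg ε, mul_nonneg hε0.le hε0.le]
    calc (1 - 3 * ε) * x ^ (-(1 + α)) ≤ ((1 + s) ^ 2)⁻¹ * x ^ (-(1 + α)) :=
          mul_le_mul_of_nonneg_right h5 hxp.le
      _ = (1 + s) ^ (-2 : ℝ) * x ^ (-(1 + α)) := by rw [h4]
      _ ≤ (1 + s) ^ (-(1 + α)) * x ^ (-(1 + α)) := mul_le_mul_of_nonneg_right h3 hxp.le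
      _ = ((1 + s) * x) ^ (-(1 + α)) := by rw [h2]
      _ ≤ y ^ (-(1 + α)) := h1
  rw [abs_le]
  constructor <;> nlinarith [hxp]


lemma delta_aux7 {m C : ℝ} (hm : 1 ≤ m) (hC : 1 ≤ C) :
    0 < 1 / (20 * m ^ 2 * C) ∧ 1 / (20 * m ^ 2 * C) ≤ 1 := by
  have h : (20:ℝ) ≤ 20 * m ^ 2 * C := by nlinarith
  exact ⟨one_div_pos.mpr (by linarith), by rw [div_le_one (by linarith)]; linarith⟩

lemma alpha_aux7 {P α : ℝ} (hP2 : 2 ≤ P) (hα : α = 1 / (5000 * Real.log P)) :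
    0 < α ∧ α ≤ 1/1000 ∧ α * Real.log P = 1/5000 := by
  have hL0 : 0 < Real.log P := Real.log_pos (by linarith)
  have hlog2 : (0.6931471803:ℝ) < Real.log 2 := Real.log_two_gt_d9
  have hmono : Real.log 2 ≤ Real.log P := Real.log_le_log (by norm_num) (by linarith)
  refine ⟨by rw [hα]; positivity, ?_, by rw [hα]; field_simp⟩
  rw [hα, div_le_div_iff₀ (by linarith) (by norm_num)]
  nlinarith

lemma exp_aux7 : Real.exp (1/2500 : ℝ) ≤ 1.001 := by
  have h := Real.add_one_le_exp (-(1/2500) : ℝ)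
  have hpos := Real.exp_pos (-(1/2500) : ℝ)
  have hpos2 := Real.exp_pos (1/2500 : ℝ)
  have h3 : Real.exp (1/2500:ℝ) * Real.exp (-(1/2500):ℝ) = 1 := by
    rw [← Real.exp_add]; norm_num
  nlinarith

lemma rpow_le_1001 {P x α : ℝ} (hP2 : 2 ≤ P) (hα0 : 0 < α)
    (hαL : α * Real.log P = 1/5000) (hx : 0 < x) (hxP : x ≤ P + 1) :
    x ^ α ≤ 1.001 := by
  have hxP2 : x ≤ P ^ 2 := by nlinarith [sq_nonneg (P - 1)]
  calc x ^ α ≤ (P ^ 2) ^ α := Real.rpow_le_rpow hx.le hxP2 hα0.le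
    _ = Real.exp (Real.log (P ^ 2) * α) := Real.rpow_def_of_pos (by positivity) α
    _ = Real.exp (1/2500 : ℝ) := by
        rw [Real.log_pow]
        congr 1
        push_cast
        linear_combination 2 * hαL
    _ ≤ 1.001 := exp_aux7

lemma close_aux7 {A B d ε p : ℝ} (hA : 0 < A) (hB : 0 < B)
    (h : (A + B) * |d| ≤ ε) (hid : p * A = 1) (hp : 0 ≤ p) :
    |d| ≤ ε * p := by
  have h1 : A * |d| ≤ ε := by nlinarith [abs_nonneg d]
  calc |d| = p * (A * |d|) := by rw [← mul_assoc, hid, one_mul]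
    _ ≤ p * ε := mul_le_mul_of_nonneg_left h1 hp
    _ = ε * p := mul_comm _ _

lemma rho_aux7 {r S ε : ℝ} (hr0 : 0 < r) (hS0 : 0 < S) (hε0 : 0 < ε) (hε1 : ε ≤ 1/100)
    (h1 : (1 + ε)⁻¹ * r ≤ S) (h2 : S ≤ (1 + ε) * r) : |r / S - 1| ≤ ε := by
  have ha : r ≤ (1 + ε) * S := by
    have h := mul_le_mul_of_nonneg_left h1 (by linarith : (0:ℝ) ≤ 1 + ε)
    rwa [← mul_assoc, mul_inv_cancel₀ (by linarith : (1:ℝ) + ε ≠ 0), one_mul] at h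
  have hb : (1 - ε) * S ≤ r := by
    nlinarith [mul_le_mul_of_nonneg_left h2 (by linarith : (0:ℝ) ≤ 1 - ε),
      mul_nonneg (mul_nonneg hε0.le hε0.le) hr0.le]
  rw [abs_le]
  constructor
  · have h3 : 1 - ε ≤ r / S := (le_div_iff₀ hS0).mpr (by linarith)
    linarith
  · have h3 : r / S ≤ 1 + ε := (div_le_iff₀ hS0).mpr (by linarith)
    linarith

lemma final_aux7 {A B Ab Bb ρ α ε : ℝ} (hA0 : 0 < A) (hB0 : 0 < B)
    (hα0 : 0 < α) (hε0 : 0 < ε) (hρ : |ρ - 1| ≤ ε)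
    (hAc : |A - Ab| ≤ 3 * ε * A) (hBc : |B - Bb| ≤ 3 * ε * B) :
    |(A + B)⁻¹ * (α * ((ρ - 1) * (A - B) + ((A - Ab) + (Bb - B))))| ≤ 10 * α * ε := by
  have hABle : |A - B| ≤ A + B := abs_le.mpr ⟨by linarith, by linarith⟩
  have hterm1 : |(ρ - 1) * (A - B)| ≤ ε * (A + B) := by
    rw [abs_mul]
    exact mul_le_mul hρ hABle (abs_nonneg _) hε0.le
  have hY : |(ρ - 1) * (A - B) + ((A - Ab) + (Bb - B))| ≤ 10 * ε * (A + B) := by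
    have t1 := abs_add_le ((ρ - 1) * (A - B)) ((A - Ab) + (Bb - B))
    have t2 := abs_add_le (A - Ab) (Bb - B)
    have t3 : |Bb - B| = |B - Bb| := abs_sub_comm _ _
    nlinarith [mul_pos hε0 hA0, mul_pos hε0 hB0]
  rw [abs_mul, abs_mul, abs_inv, abs_of_pos (add_pos hA0 hB0), abs_of_pos hα0]
  have hfin := mul_le_mul_of_nonneg_left (mul_le_mul_of_nonneg_left hY hα0.le)
    (inv_nonneg.mpr (add_pos hA0 hB0).le)
  have heq : (A + B)⁻¹ * (α * (10 * ε * (A + B))) = 10 * α * ε := by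
    field_simp
  linarith

lemma UP_aux7 {m C U : ℝ} (hm : 1 ≤ m) (hC : 1 ≤ C) (hU : 1 ≤ U) :
    U ≤ m * C * U := by
  have h1 : 1 ≤ m * C := by nlinarith
  nlinarith [mul_le_mul_of_nonneg_right h1 (by linarith : (0:ℝ) ≤ U)]

set_option maxHeartbeats 1000000 in
/-- Gradient stability: if `‖L(f)(f − f̄)‖_∞ ≤ ε` and `r ≈_{1+ε} cᵀf̄ − F`, then
the vector `g̃` defined from `f` and `r` approximates the gradient `g(f̄)`:
`‖L(f)^{−1}(g̃ − g(f̄))‖_∞ ≤ 10·α·ε`. -/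
theorem stmt7 {E : Type*} [Fintype E]
    (m C U : ℤ) (hm1 : 1 ≤ m) (hC1 : 1 ≤ C) (hU1 : 1 ≤ U)
    (hmE : (Fintype.card E : ℤ) ≤ m) (hmCU : 2 ≤ m * C * U)
    (c : E → ℤ) (hc : ∀ e, |c e| ≤ C)
    (u : E → ℤ) (hu : ∀ e, 1 ≤ u e ∧ u e ≤ U)
    (F : ℤ) (α δ : ℝ)
    (hα : α = 1 / (5000 * Real.log ((m * C * U : ℤ) : ℝ)))
    (hδ : δ = 1 / (20 * (m : ℝ) ^ 2 * (C : ℝ)))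
    -- `f` and `f̄` are strictly feasible and `cᵀf̄ > F`
    (f fbar : E → ℝ)
    (hfeas : ∀ e, -δ < f e ∧ f e < (u e : ℝ))
    (hfeasbar : ∀ e, -δ < fbar e ∧ fbar e < (u e : ℝ))
    (hcostbar : (F : ℝ) < ∑ e : E, (c e : ℝ) * fbar e)
    -- lengths `ℓ(f)` and gradient `g(f̄)`
    (ℓf gfbar : E → ℝ)
    (hℓf : ∀ e, ℓf e = ((u e : ℝ) - f e) ^ (-1 - α) + (f e + δ) ^ (-1 - α))
    (hgfbar : ∀ e, gfbar e
        = 20 * (m : ℝ) * ((∑ e' : E, (c e' : ℝ) * fbar e') - (F : ℝ))⁻¹ * (c e : ℝ)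
          + α * ((u e : ℝ) - fbar e) ^ (-1 - α) - α * (fbar e + δ) ^ (-1 - α))
    (ε : ℝ) (hε0 : 0 < ε) (hε : ε ≤ 1 / 100)
    (hclose : ∀ e, |ℓf e * (f e - fbar e)| ≤ ε)
    (r : ℝ) (hr0 : 0 < r)
    (hr1 : (1 + ε)⁻¹ * r ≤ (∑ e : E, (c e : ℝ) * fbar e) - (F : ℝ))
    (hr2 : (∑ e : E, (c e : ℝ) * fbar e) - (F : ℝ) ≤ (1 + ε) * r)
    -- the approximate gradient `g̃`
    (gt : E → ℝ)
    (hgt : ∀ e, gt e = (r / ((∑ e' : E, (c e' : ℝ) * fbar e') - (F : ℝ)))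
        * (20 * (m : ℝ) * (c e : ℝ) / r
          + α * ((u e : ℝ) - f e) ^ (-1 - α) - α * (f e + δ) ^ (-1 - α))) :
    ∀ e, |(ℓf e)⁻¹ * (gt e - gfbar e)| ≤ 10 * α * ε := by
  -- global constants
  have hm1' : (1:ℝ) ≤ (m:ℝ) := by exact_mod_cast hm1
  have hC1' : (1:ℝ) ≤ (C:ℝ) := by exact_mod_cast hC1
  have hU1' : (1:ℝ) ≤ (U:ℝ) := by exact_mod_cast hU1
  have hP2 : (2:ℝ) ≤ ((m * C * U : ℤ) : ℝ) := by exact_mod_cast hmCU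
  obtain ⟨hδ0, hδ1⟩ := delta_aux7 hm1' hC1'
  rw [← hδ] at hδ0 hδ1
  obtain ⟨hα0', hα1', hαL⟩ := alpha_aux7 hP2 hα
  have hUP : (U:ℝ) ≤ ((m * C * U : ℤ) : ℝ) := by
    push_cast
    exact UP_aux7 hm1' hC1' hU1'
  intro e
  obtain ⟨hf1, hf2⟩ := hfeas e
  obtain ⟨hfb1, hfb2⟩ := hfeasbar e
  have hexpeq : (-1 - α : ℝ) = -(1 + α) := by ring
  have hcl := hclose e
  rw [hℓf e, hexpeq] at hcl
  set S := (∑ e' : E, (c e' : ℝ) * fbar e') - (F : ℝ) with hS_def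
  set a := (u e : ℝ) - f e with ha_def
  set b := f e + δ with hb_def
  set abar := (u e : ℝ) - fbar e with habar_def
  set bbar := fbar e + δ with hbbar_def
  set A := a ^ (-(1 + α)) with hA_def
  set B := b ^ (-(1 + α)) with hB_def
  set Ab := abar ^ (-(1 + α)) with hAb_def
  set Bb := bbar ^ (-(1 + α)) with hBb_def
  have hS0 : 0 < S := by rw [hS_def]; exact sub_pos.mpr hcostbar
  have hUe : ((u e : ℤ) : ℝ) ≤ (U:ℝ) := by exact_mod_cast (hu e).2
  have ha : 0 < a := by rw [ha_def]; linarith only [hf2]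
  have hb : 0 < b := by rw [hb_def]; linarith only [hf1]
  have habar0 : 0 < abar := by rw [habar_def]; linarith only [hfb2]
  have hbbar0 : 0 < bbar := by rw [hbbar_def]; linarith only [hfb1]
  have haU : a ≤ ((m * C * U : ℤ) : ℝ) + 1 := by
    rw [ha_def]; linarith only [hf1, hδ1, hUe, hUP]
  have hbU : b ≤ ((m * C * U : ℤ) : ℝ) + 1 := by
    rw [hb_def]; linarith only [hf2, hδ1, hUe, hUP]
  have hA0 : 0 < A := by rw [hA_def]; exact Real.rpow_pos_of_pos ha _
  have hB0 : 0 < B := by rw [hB_def]; exact Real.rpow_pos_of_pos hb _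
  -- closeness of a, abar and b, bbar
  have hcl2 : (A + B) * |f e - fbar e| ≤ ε := by
    rwa [abs_mul, abs_of_pos (add_pos hA0 hB0)] at hcl
  have hdA : |a - abar| ≤ ε * a ^ (1 + α) := by
    have hid : a ^ (1 + α) * A = 1 := by
      rw [hA_def, ← Real.rpow_add ha, show (1 + α) + -(1 + α) = 0 by ring, Real.rpow_zero]
    have h3 : |a - abar| = |f e - fbar e| := by
      rw [ha_def, habar_def,
        show (u e : ℝ) - f e - ((u e : ℝ) - fbar e) = -(f e - fbar e) by ring, abs_neg]
    rw [h3]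
    exact close_aux7 hA0 hB0 hcl2 hid (Real.rpow_nonneg ha.le _)
  have hdB : |b - bbar| ≤ ε * b ^ (1 + α) := by
    have hid : b ^ (1 + α) * B = 1 := by
      rw [hB_def, ← Real.rpow_add hb, show (1 + α) + -(1 + α) = 0 by ring, Real.rpow_zero]
    have h3 : |b - bbar| = |f e - fbar e| := by
      rw [hb_def, hbbar_def, show f e + δ - (fbar e + δ) = f e - fbar e by ring]
    rw [h3]
    have hcl2' : (B + A) * |f e - fbar e| ≤ ε := by rwa [add_comm A B] at hcl2
    exact close_aux7 hB0 hA0 hcl2' hid (Real.rpow_nonneg hb.le _)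
  have hAc : |A - Ab| ≤ 3 * ε * A :=
    pert_aux7 ha habar0 hα0' hα1' hε0 hε (rpow_le_1001 hP2 hα0' hαL ha haU) hdA
  have hBc : |B - Bb| ≤ 3 * ε * B :=
    pert_aux7 hb hbbar0 hα0' hα1' hε0 hε (rpow_le_1001 hP2 hα0' hαL hb hbU) hdB
  have hρ : |r / S - 1| ≤ ε := rho_aux7 hr0 hS0 hε0 hε hr1 hr2
  -- rewrite the goal
  have habs : (ℓf e)⁻¹ * (gt e - gfbar e)
      = (A + B)⁻¹ * (α * ((r / S - 1) * (A - B) + ((A - Ab) + (Bb - B)))) := by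
    rw [hℓf e, hgt e, hgfbar e, hexpeq, ← ha_def, ← hb_def, ← habar_def,
      ← hbbar_def, ← hA_def, ← hB_def, ← hAb_def, ← hBb_def]
    congr 1
    field_simp
    ring
  rw [habs]
  exact final_aux7 hA0 hB0 hα0' hε0 hρ hAc hBc
end

section
/- Assume F ≤ −1, −F ≤ mCU, |E| ≤ m, and u_e ≥ 1 for all e ∈ E. Then the zero flow f = 0 is strictly feasible, cᵀ·0 − F = −F > 0, and Φ(0) = 20·m·log(−F) + Σ_{e∈E}(u_e^{−α} + δ^{−α}) ≤ 100·m·log(mCU). -/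
/-- The zero flow is strictly feasible, has `cᵀ·0 − F = −F > 0`, and its potential
`Φ(0) = 20·m·log(−F) + Σ_e (u_e^{−α} + δ^{−α})` is at most `100·m·log(mCU)`. -/
theorem stmt8 {E : Type*} [Fintype E]
    (m C U : ℤ) (hm1 : 1 ≤ m) (hC1 : 1 ≤ C) (hU1 : 1 ≤ U)
    (hmE : (Fintype.card E : ℤ) ≤ m) (hmCU : 2 ≤ m * C * U)
    (c : E → ℤ) (hc : ∀ e, |c e| ≤ C)
    (u : E → ℤ) (hu : ∀ e, 1 ≤ u e ∧ u e ≤ U)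
    (F : ℤ) (α δ : ℝ)
    (hα : α = 1 / (5000 * Real.log ((m * C * U : ℤ) : ℝ)))
    (hδ : δ = 1 / (20 * (m : ℝ) ^ 2 * (C : ℝ)))
    (hF : F ≤ -1) (hFm : -F ≤ m * C * U) :
    (∀ e : E, -δ < (0 : ℝ) ∧ (0 : ℝ) < (u e : ℝ))
    ∧ (∑ e : E, (c e : ℝ) * 0) - (F : ℝ) = -(F : ℝ)
    ∧ (0 : ℝ) < -(F : ℝ)
    ∧ 20 * (m : ℝ) * Real.log ((∑ e : E, (c e : ℝ) * 0) - (F : ℝ))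
        + ∑ e : E, (((u e : ℝ) - 0) ^ (-α) + ((0 : ℝ) + δ) ^ (-α))
      = 20 * (m : ℝ) * Real.log (-(F : ℝ)) + ∑ e : E, ((u e : ℝ) ^ (-α) + δ ^ (-α))
    ∧ 20 * (m : ℝ) * Real.log (-(F : ℝ)) + ∑ e : E, ((u e : ℝ) ^ (-α) + δ ^ (-α))
      ≤ 100 * (m : ℝ) * Real.log ((m * C * U : ℤ) : ℝ) := by
  have hmR : (1 : ℝ) ≤ (m : ℝ) := by exact_mod_cast hm1
  have hCR : (1 : ℝ) ≤ (C : ℝ) := by exact_mod_cast hC1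
  have hM2 : (2 : ℝ) ≤ ((m * C * U : ℤ) : ℝ) := by exact_mod_cast hmCU
  set M : ℝ := ((m * C * U : ℤ) : ℝ) with hMdef
  have hM0 : 0 < M := by linarith
  have hlog2 : (0.6931471803 : ℝ) < Real.log 2 := Real.log_two_gt_d9
  have hLge : Real.log 2 ≤ Real.log M := Real.log_le_log (by norm_num) hM2
  have hL0 : 0 < Real.log M := by linarith
  have hα0 : 0 < α := by rw [hα]; positivity
  have hδ0 : 0 < δ := by rw [hδ]; positivity
  refine ⟨fun e => ⟨by linarith, by exact_mod_cast (hu e).1⟩, by simp, by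
      have : (1 : ℝ) ≤ -(F : ℝ) := by exact_mod_cast (by linarith : (1:ℤ) ≤ -F)
      linarith, by simp, ?_⟩
  -- main bound
  have hu1 : ∀ e : E, ((u e : ℝ)) ^ (-α) ≤ 1 := fun e =>
    Real.rpow_le_one_of_one_le_of_nonpos (by exact_mod_cast (hu e).1) (by linarith)
  have hδbound : δ ^ (-α) ≤ 3 := by
    have h1δ : (1 / δ : ℝ) = 20 * (m : ℝ) ^ 2 * (C : ℝ) := by
      rw [hδ]; field_simp
    have hint : (20 : ℤ) * m ^ 2 * C ≤ (m * C * U) ^ 7 := by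
      have h5 : (2 : ℤ) ^ 5 ≤ (m * C * U) ^ 5 := pow_le_pow_left₀ (by norm_num) hmCU 5
      have hsq0 : (0 : ℤ) ≤ m ^ 2 * C := by positivity
      have hCU : (1 : ℤ) ≤ C * U ^ 2 := by nlinarith
      have hsq : m ^ 2 * C ≤ (m * C * U) ^ 2 := by
        calc m ^ 2 * C = m ^ 2 * C * 1 := by ring
          _ ≤ m ^ 2 * C * (C * U ^ 2) := mul_le_mul_of_nonneg_left hCU hsq0
          _ = (m * C * U) ^ 2 := by ring
      calc (20 : ℤ) * m ^ 2 * C ≤ 2 ^ 5 * (m * C * U) ^ 2 := by nlinarith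
        _ ≤ (m * C * U) ^ 5 * (m * C * U) ^ 2 :=
            mul_le_mul_of_nonneg_right h5 (sq_nonneg _)
        _ = (m * C * U) ^ 7 := by ring
    have hintR : (20 * (m : ℝ) ^ 2 * (C : ℝ)) ≤ M ^ 7 := by
      rw [hMdef]; exact_mod_cast hint
    have hlogδ : Real.log (1 / δ) ≤ 7 * Real.log M := by
      rw [h1δ]
      calc Real.log (20 * (m : ℝ) ^ 2 * (C : ℝ)) ≤ Real.log (M ^ 7) :=
            Real.log_le_log (by positivity) hintR
        _ = 7 * Real.log M := by rw [Real.log_pow]; push_cast; ring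
    have : δ ^ (-α) = Real.exp (α * Real.log (1 / δ)) := by
      rw [Real.rpow_def_of_pos hδ0, Real.log_div one_ne_zero (ne_of_gt hδ0), Real.log_one]
      ring_nf
    rw [this]
    have hexparg : α * Real.log (1 / δ) ≤ 1 := by
      rw [hα]
      have hlogδ0 : 0 ≤ Real.log (1 / δ) := by
        rw [h1δ]; apply Real.log_nonneg; nlinarith
      rw [div_mul_eq_mul_div, one_mul, div_le_one (by positivity)]
      calc Real.log (1 / δ) ≤ 7 * Real.log M := hlogδ
        _ ≤ 5000 * Real.log M := by linarith
    calc Real.exp (α * Real.log (1 / δ)) ≤ Real.exp 1 := Real.exp_le_exp.mpr hexparg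
      _ ≤ 3 := by linarith [Real.exp_one_lt_d9]
  have hsum : ∑ e : E, ((u e : ℝ) ^ (-α) + δ ^ (-α)) ≤ 4 * (m : ℝ) := by
    calc ∑ e : E, ((u e : ℝ) ^ (-α) + δ ^ (-α)) ≤ ∑ _e : E, (4 : ℝ) :=
          Finset.sum_le_sum fun e _ => by linarith [hu1 e]
      _ = 4 * (Fintype.card E : ℝ) := by simp [mul_comm]
      _ ≤ 4 * (m : ℝ) := by
          have : (Fintype.card E : ℝ) ≤ (m : ℝ) := by exact_mod_cast hmE
          linarith
  have hlogF : Real.log (-(F : ℝ)) ≤ Real.log M := by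
    apply Real.log_le_log
    · have : (1 : ℤ) ≤ -F := by linarith
      have : (1 : ℝ) ≤ -(F : ℝ) := by exact_mod_cast this
      linarith
    · rw [hMdef]; exact_mod_cast hFm
  have h20 : 20 * (m : ℝ) * Real.log (-(F : ℝ)) ≤ 20 * (m : ℝ) * Real.log M := by
    have h0F : 0 ≤ Real.log (-(F : ℝ)) ∨ True := Or.inr trivial
    have hm0 : (0 : ℝ) ≤ 20 * (m : ℝ) := by linarith
    exact mul_le_mul_of_nonneg_left hlogF hm0
  have hfinal : 4 * (m : ℝ) ≤ 80 * (m : ℝ) * Real.log M := by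
    nlinarith
  linarith
end
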